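/- arXiv:2512.16570 — 13 statements merged into one kernel-verified Lean document; each statement's English description precedes it below -/
import Mathlib

section
/- For every integer m ≥ 16 and every integer B with 1 ≤ B < ln m, define t = ⌊(m/(2·B·ln m))^{1/(B+2)}⌋. Then there exists an indexed family of B·t^t t-labelings of an m-element set that is (B+1)-way qualitatively independent. -/
open Finset

set_option maxHeartbeats 2000000

private lemma fiber_card {k r t : ℕ} (J : Fin r → Fin k) (hJ : Function.Injective J)
    (a : Fin r → Fin t) :
    (Finset.univ.filter (fun g : Fin k → Fin t => ∀ ℓ, g (J ℓ) = a ℓ)).card = t ^ (k - r) := by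
  classical
  rw [← Fintype.card_subtype]
  have e : {g : Fin k → Fin t // ∀ ℓ, g (J ℓ) = a ℓ} ≃
      ({j : Fin k // ¬∃ ℓ, J ℓ = j} → Fin t) :=
  { toFun := fun g j => g.1 j.1
    invFun := fun h => ⟨fun j => if hj : ∃ ℓ, J ℓ = j then a hj.choose
        else h ⟨j, hj⟩, by
      intro ℓ
      have hj : ∃ ℓ', J ℓ' = J ℓ := ⟨ℓ, rfl⟩
      simp only [dif_pos hj]
      rw [hJ hj.choose_spec]⟩
    left_inv := by
      intro g
      apply Subtype.ext
      funext j
      simp only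
      split_ifs with hj
      · exact (g.2 _).symm.trans (congrArg g.1 hj.choose_spec)
      · rfl
    right_inv := by
      intro h
      funext j
      exact dif_neg j.2 }
  rw [Fintype.card_congr e, Fintype.card_fun, Fintype.card_fin]
  congr 1
  have hr : Fintype.card {j : Fin k // ∃ ℓ, J ℓ = j} = r := by
    rw [Fintype.card_subtype]
    have h2 : Finset.univ.filter (fun j => ∃ ℓ, J ℓ = j) = Finset.univ.image J := by
      ext j; simp
    rw [h2, Finset.card_image_of_injective _ hJ, Finset.card_univ, Fintype.card_fin]
  rw [Fintype.card_subtype_compl, hr, Fintype.card_fin]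

private lemma exists_good (m k r t : ℕ)
    (hnum : (k ^ r * t ^ r) * (t ^ k - t ^ (k - r)) ^ m < (t ^ k) ^ m) :
    ∃ f : Fin m → Fin k → Fin t,
      ∀ J : Fin r → Fin k, Function.Injective J →
        ∀ a : Fin r → Fin t, ∃ u : Fin m, ∀ ℓ, f u (J ℓ) = a ℓ := by
  classical
  set S : (Fin r → Fin k) → (Fin r → Fin t) → Finset (Fin k → Fin t) :=
    fun J a => Finset.univ.filter (fun g : Fin k → Fin t => ¬ ∀ ℓ, g (J ℓ) = a ℓ) with hS
  set Bad : Finset (Fin m → Fin k → Fin t) :=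
    (Finset.univ.filter
        (fun p : (Fin r → Fin k) × (Fin r → Fin t) => Function.Injective p.1)).biUnion
      (fun p => Fintype.piFinset (fun _ : Fin m => S p.1 p.2)) with hBad
  have hScard : ∀ (J : Fin r → Fin k), Function.Injective J → ∀ a,
      (S J a).card = t ^ k - t ^ (k - r) := by
    intro J hJ a
    rw [hS]
    simp only
    rw [Finset.filter_not, Finset.card_sdiff_of_subset (Finset.filter_subset _ _), fiber_card J hJ a]
    congr 1
    rw [Finset.card_univ, Fintype.card_fun, Fintype.card_fin, Fintype.card_fin]
  have hBadCard : Bad.card < Fintype.card (Fin m → Fin k → Fin t) := by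
    have h1 : Bad.card ≤ (k ^ r * t ^ r) * (t ^ k - t ^ (k - r)) ^ m := by
      calc Bad.card ≤ ∑ p ∈ Finset.univ.filter
            (fun p : (Fin r → Fin k) × (Fin r → Fin t) => Function.Injective p.1),
            (Fintype.piFinset (fun _ : Fin m => S p.1 p.2)).card := Finset.card_biUnion_le
        _ ≤ ∑ _p ∈ Finset.univ.filter
            (fun p : (Fin r → Fin k) × (Fin r → Fin t) => Function.Injective p.1),
            (t ^ k - t ^ (k - r)) ^ m := by
            apply Finset.sum_le_sum
            intro p hp
            rw [Fintype.card_piFinset]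
            rw [Finset.prod_const, Finset.card_univ, Fintype.card_fin]
            have := hScard p.1 (by simpa using (Finset.mem_filter.mp hp).2) p.2
            rw [this]
        _ = (Finset.univ.filter
            (fun p : (Fin r → Fin k) × (Fin r → Fin t) => Function.Injective p.1)).card
              * (t ^ k - t ^ (k - r)) ^ m := by rw [Finset.sum_const, smul_eq_mul]
        _ ≤ (k ^ r * t ^ r) * (t ^ k - t ^ (k - r)) ^ m := by
            apply Nat.mul_le_mul_right
            calc _ ≤ Fintype.card ((Fin r → Fin k) × (Fin r → Fin t)) := by
                  rw [← Finset.card_univ]; exact Finset.card_le_card (Finset.filter_subset _ _)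
              _ = k ^ r * t ^ r := by
                  simp [Fintype.card_fun]
    have h2 : Fintype.card (Fin m → Fin k → Fin t) = (t ^ k) ^ m := by
      simp [Fintype.card_fun]
    omega
  obtain ⟨f, hf⟩ : ∃ f, f ∉ Bad := by
    by_contra hcon
    push_neg at hcon
    have h4 : (Finset.univ : Finset (Fin m → Fin k → Fin t)) ⊆ Bad := fun x _ => hcon x
    have h5 := Finset.card_le_card h4
    rw [Finset.card_univ] at h5
    omega
  refine ⟨f, fun J hJ a => ?_⟩
  have hmem_pair : (J, a) ∈ Finset.univ.filter
      (fun p : (Fin r → Fin k) × (Fin r → Fin t) => Function.Injective p.1) :=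
    Finset.mem_filter.mpr ⟨Finset.mem_univ _, hJ⟩
  have h3 : f ∉ Fintype.piFinset (fun _ : Fin m => S J a) := by
    intro hmem
    exact hf (Finset.mem_biUnion.mpr ⟨(J, a), hmem_pair, hmem⟩)
  rw [Fintype.mem_piFinset] at h3
  push_neg at h3
  obtain ⟨u, hu⟩ := h3
  refine ⟨u, ?_⟩
  rw [hS] at hu
  simp only [Finset.mem_filter, Finset.mem_univ, true_and, not_not] at hu
  exact hu

private lemma two_mul_sq_log_le {L : ℝ} (hL : 2.772 < L) : 2 * L ^ 2 ≤ Real.exp L := by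
  have hL0 : (0:ℝ) < L := by linarith
  have hs := Real.sum_le_exp_of_nonneg (le_of_lt hL0) 7
  have heq : ∑ i ∈ Finset.range 7, L ^ i / (i.factorial : ℝ) =
      1 + L + L ^ 2 / 2 + L ^ 3 / 6 + L ^ 4 / 24 + L ^ 5 / 120 + L ^ 6 / 720 := by
    rw [Finset.sum_range_succ, Finset.sum_range_succ, Finset.sum_range_succ,
      Finset.sum_range_succ, Finset.sum_range_succ, Finset.sum_range_succ,
      Finset.sum_range_succ, Finset.sum_range_zero]
    norm_num [Nat.factorial]
  rw [heq] at hs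
  nlinarith [hs, hL, sq_nonneg (L - 2.772), sq_nonneg (L ^ 2 - 8 * L),
    sq_nonneg L, mul_pos hL0 hL0, pow_pos hL0 3, pow_pos hL0 4]

private lemma key_real (K s : ℝ) (m : ℕ) (hK : 0 < K) (hs : 2 ≤ s)
    (h : Real.log (K * s) < (m : ℝ) / s) : K * s * (s - 1) ^ m < s ^ m := by
  have hs0 : 0 < s := by linarith
  have hKs : 0 < K * s := mul_pos hK hs0
  have h1 : K * s < Real.exp ((m : ℝ) / s) := by
    calc K * s = Real.exp (Real.log (K * s)) := (Real.exp_log hKs).symm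
      _ < Real.exp ((m : ℝ) / s) := Real.exp_lt_exp.2 h
  have h2 : (s - 1) ^ m ≤ s ^ m * Real.exp (-((m : ℝ) / s)) := by
    have hinv : s * (1 / s) = 1 := by field_simp
    have hb : s - 1 ≤ s * Real.exp (-(1 / s)) := by
      have := mul_le_mul_of_nonneg_left (Real.add_one_le_exp (-(1 / s))) hs0.le
      nlinarith [this, hinv]
    calc (s - 1) ^ m ≤ (s * Real.exp (-(1 / s))) ^ m :=
          pow_le_pow_left₀ (by linarith) hb m
      _ = s ^ m * Real.exp (-(1 / s)) ^ m := mul_pow _ _ _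
      _ = s ^ m * Real.exp (-((m : ℝ) / s)) := by
          rw [← Real.exp_nat_mul]
          congr 1
          field_simp
  have h3 : (0:ℝ) < s ^ m * Real.exp (-((m : ℝ) / s)) := by positivity
  calc K * s * (s - 1) ^ m ≤ K * s * (s ^ m * Real.exp (-((m : ℝ) / s))) :=
        mul_le_mul_of_nonneg_left h2 hKs.le
    _ < Real.exp ((m : ℝ) / s) * (s ^ m * Real.exp (-((m : ℝ) / s))) :=
        mul_lt_mul_of_pos_right h1 h3
    _ = s ^ m * (Real.exp (-((m : ℝ) / s)) * Real.exp ((m : ℝ) / s)) := by ring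
    _ = s ^ m := by rw [← Real.exp_add]; simp

/-- For every integer `m ≥ 16` and every integer `B` with
`1 ≤ B < ln m`, setting `t = ⌊(m/(2·B·ln m))^(1/(B+2))⌋`, there exists an
indexed family of `B·t^t` `t`-labelings of an `m`-element set that is
`(B+1)`-way qualitatively independent. -/
theorem stmt_2 (m B : ℕ) (hm : 16 ≤ m) (hB : 1 ≤ B) (hBlt : (B : ℝ) < Real.log m)
    (t : ℕ)
    (htdef : t = ⌊((m : ℝ) / (2 * (B : ℝ) * Real.log m)) ^ ((1 : ℝ) / ((B : ℝ) + 2))⌋₊) :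
    ∃ σ : Fin (B * t ^ t) → Fin m → Fin t,
      ∀ J : Fin (B + 1) → Fin (B * t ^ t), Function.Injective J →
        ∀ a : Fin (B + 1) → Fin t, ∃ u : Fin m, ∀ ℓ : Fin (B + 1), σ (J ℓ) u = a ℓ := by
  have hm16 : (16:ℝ) ≤ (m:ℝ) := by exact_mod_cast hm
  have hm0 : (0:ℝ) < (m:ℝ) := by linarith
  set L : ℝ := Real.log m with hLdef
  have hB1 : (1:ℝ) ≤ (B:ℝ) := by exact_mod_cast hB
  have hL27 : 2.772 < L := by
    have h2 := Real.log_two_gt_d9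
    have h16 : Real.log 16 ≤ L := Real.log_le_log (by norm_num) hm16
    have h163 : Real.log 16 = 4 * Real.log 2 := by
      rw [show (16:ℝ) = 2 ^ (4:ℕ) by norm_num, Real.log_pow]
      push_cast; ring
    linarith
  have hL0 : 0 < L := by linarith
  have hexpL : Real.exp L = (m:ℝ) := Real.exp_log hm0
  -- 2 L^2 ≤ m
  have hH0 : 2 * L ^ 2 ≤ (m:ℝ) := by
    have := two_mul_sq_log_le hL27
    rw [hexpL] at this
    exact this
  -- basic quantities
  have h2BL1 : (1:ℝ) < 2 * B * L := by nlinarith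
  have h2BL0 : (0:ℝ) < 2 * B * L := by linarith
  set x : ℝ := (m:ℝ) / (2 * (B:ℝ) * L) with hxdef
  have hx1 : (1:ℝ) ≤ x := by
    rw [hxdef, le_div_iff₀ h2BL0, one_mul]
    nlinarith [hBlt, hL0]
  have hx0 : (0:ℝ) ≤ x := by linarith
  have ht1 : 1 ≤ t := by
    rw [htdef]
    apply Nat.le_floor
    push_cast
    exact Real.one_le_rpow hx1 (by positivity)
  -- t^(B+2) ≤ x
  have htpow : (t:ℝ) ^ (B + 2) ≤ x := by
    have h1 : (t:ℝ) ≤ x ^ ((1:ℝ) / ((B:ℝ) + 2)) := by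
      rw [htdef]
      exact Nat.floor_le (Real.rpow_nonneg hx0 _)
    calc (t:ℝ) ^ (B + 2) ≤ (x ^ ((1:ℝ) / ((B:ℝ) + 2))) ^ (B + 2) :=
          pow_le_pow_left₀ (by positivity) h1 _
      _ = x := by
          rw [← Real.rpow_natCast (x ^ ((1:ℝ) / ((B:ℝ) + 2))) (B + 2), ← Real.rpow_mul hx0]
          rw [show (1:ℝ) / ((B:ℝ) + 2) * ((B + 2 : ℕ) : ℝ) = 1 by
            push_cast; field_simp]
          exact Real.rpow_one x
  rcases Nat.lt_or_ge t 2 with ht2 | ht2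
  · -- t = 1 : trivial
    have : t = 1 := by omega
    subst this
    refine ⟨fun _ _ => ⟨0, by omega⟩, fun J _ a => ⟨⟨0, by omega⟩, fun ℓ => ?_⟩⟩
    exact Subsingleton.elim _ _
  · -- main case t ≥ 2
    obtain ⟨k, hkdef⟩ : ∃ k : ℕ, B * t ^ t = k := ⟨_, rfl⟩
    rw [hkdef]
    have hT2 : (2:ℝ) ≤ (t:ℝ) := by exact_mod_cast ht2
    have hT0 : (0:ℝ) < (t:ℝ) := by linarith
    have hkB : 4 * B ≤ k := by
      have : 4 ≤ t ^ t := by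
        calc 4 = 2 ^ 2 := rfl
          _ ≤ t ^ 2 := Nat.pow_le_pow_left ht2 2
          _ ≤ t ^ t := Nat.pow_le_pow_right (by omega) ht2
      calc 4 * B = B * 4 := by ring
        _ ≤ B * t ^ t := Nat.mul_le_mul_left B this
        _ = k := hkdef
    have hrk : B + 1 ≤ k := by omega
    have hk1 : 1 ≤ k := by omega
    have hk0 : (0:ℝ) < (k:ℝ) := by exact_mod_cast hk1
    -- log bounds
    have hlogT0 : 0 < Real.log t := Real.log_pos (by exact_mod_cast ht2)
    have hF1 : ((B:ℝ) + 2) * Real.log t < L := by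
      have hxm : x < (m:ℝ) := by
        rw [hxdef]
        exact div_lt_self hm0 h2BL1
      have h1 : (t:ℝ) ^ (B + 2) < (m:ℝ) := lt_of_le_of_lt htpow hxm
      have h2 := Real.log_lt_log (by positivity) h1
      rw [Real.log_pow] at h2
      push_cast at h2
      linarith
    have hlogB : Real.log B ≤ L / 2 := by
      have h1 : Real.log B ≤ Real.log L := Real.log_le_log (by linarith) hBlt.le
      have h2 : Real.log L ≤ L / 2 := by
        have hs0 : 0 < Real.sqrt L := Real.sqrt_pos.mpr hL0
        have h3 : Real.log L = 2 * Real.log (Real.sqrt L) := by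
          rw [Real.log_sqrt hL0.le]; ring
        have h4 : Real.log (Real.sqrt L) ≤ Real.sqrt L - 1 :=
          Real.log_le_sub_one_of_pos hs0
        nlinarith [sq_nonneg (Real.sqrt L - 2), Real.sq_sqrt hL0.le]
      linarith
    have hlogB0 : 0 ≤ Real.log B := Real.log_nonneg hB1
    -- m / t^(B+1) ≥ 2 B t L
    have hms : 2 * (B:ℝ) * L * (t:ℝ) ≤ (m:ℝ) / (t:ℝ) ^ (B + 1) := by
      rw [le_div_iff₀ (by positivity)]
      have h1 : (t:ℝ) ^ (B + 2) * (2 * (B:ℝ) * L) ≤ (m:ℝ) := by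
        rw [← le_div_iff₀ h2BL0]
        exact htpow
      calc 2 * (B:ℝ) * L * (t:ℝ) * (t:ℝ) ^ (B + 1) = (t:ℝ) ^ (B + 2) * (2 * (B:ℝ) * L) := by
            rw [pow_succ]
            ring
        _ ≤ (m:ℝ) := h1
    -- the key log inequality
    have hkey : Real.log ((k:ℝ) ^ (B + 1) * (t:ℝ) ^ (B + 1)) < (m:ℝ) / (t:ℝ) ^ (B + 1) := by
      have hlogk : Real.log k = Real.log B + (t:ℝ) * Real.log t := by
        rw [← hkdef]
        push_cast
        rw [Real.log_mul (by positivity) (by positivity), Real.log_pow]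
      have e1 : Real.log ((k:ℝ) ^ (B + 1) * (t:ℝ) ^ (B + 1)) =
          ((B:ℝ) + 1) * Real.log B + ((B:ℝ) + 1) * ((t:ℝ) + 1) * Real.log t := by
        rw [Real.log_mul (by positivity) (by positivity), Real.log_pow, Real.log_pow, hlogk]
        push_cast
        ring
      rw [e1]
      have step1 : ((B:ℝ) + 1) * Real.log B ≤ (B:ℝ) * L := by
        calc ((B:ℝ) + 1) * Real.log B ≤ (2 * (B:ℝ)) * Real.log B :=
              mul_le_mul_of_nonneg_right (by linarith) hlogB0
          _ ≤ (2 * (B:ℝ)) * (L / 2) := by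
              apply mul_le_mul_of_nonneg_left hlogB (by linarith)
          _ = (B:ℝ) * L := by ring
      have step2 : ((B:ℝ) + 1) * ((t:ℝ) + 1) * Real.log t < ((t:ℝ) + 1) * L := by
        have h0 : (0:ℝ) ≤ ((t:ℝ) + 1) * Real.log t := by positivity
        calc ((B:ℝ) + 1) * ((t:ℝ) + 1) * Real.log t
            = ((B:ℝ) + 1) * (((t:ℝ) + 1) * Real.log t) := by ring
          _ ≤ ((B:ℝ) + 2) * (((t:ℝ) + 1) * Real.log t) :=
              mul_le_mul_of_nonneg_right (by linarith) h0
          _ = ((t:ℝ) + 1) * (((B:ℝ) + 2) * Real.log t) := by ring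
          _ < ((t:ℝ) + 1) * L := mul_lt_mul_of_pos_left hF1 (by linarith)
      have step3 : (B:ℝ) * L + ((t:ℝ) + 1) * L ≤ 2 * (B:ℝ) * L * (t:ℝ) := by
        have h5 : (0:ℝ) ≤ ((B:ℝ) - 1) * (2 * (t:ℝ) - 1) :=
          mul_nonneg (by linarith) (by linarith)
        have h6 : (B:ℝ) + ((t:ℝ) + 1) ≤ 2 * (B:ℝ) * (t:ℝ) := by nlinarith [h5, hT2]
        have h7 := mul_le_mul_of_nonneg_right h6 hL0.le
        nlinarith [h7]
      linarith [hms]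
    -- the numeric inequality in ℕ
    have hnum : (k ^ (B + 1) * t ^ (B + 1)) * (t ^ k - t ^ (k - (B + 1))) ^ m
        < (t ^ k) ^ m := by
      have hsub : t ^ (k - (B + 1)) ≤ t ^ k := Nat.pow_le_pow_right (by omega) (by omega)
      rw [← Nat.cast_lt (α := ℝ)]
      push_cast [hsub]
      have e1 : (t:ℝ) ^ k = (t:ℝ) ^ (k - (B + 1)) * (t:ℝ) ^ (B + 1) := by
        rw [← pow_add]
        congr 1
        omega
      have hsR : (2:ℝ) ≤ (t:ℝ) ^ (B + 1) := by
        calc (2:ℝ) ≤ (t:ℝ) := hT2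
          _ = (t:ℝ) ^ 1 := (pow_one _).symm
          _ ≤ (t:ℝ) ^ (B + 1) := pow_le_pow_right₀ (by linarith) (by omega)
      have hmain : (k:ℝ) ^ (B + 1) * (t:ℝ) ^ (B + 1) * ((t:ℝ) ^ (B + 1) - 1) ^ m
          < ((t:ℝ) ^ (B + 1)) ^ m :=
        key_real ((k:ℝ) ^ (B + 1)) ((t:ℝ) ^ (B + 1)) m (by positivity) hsR hkey
      have hpos : (0:ℝ) < ((t:ℝ) ^ (k - (B + 1))) ^ m := by positivity
      calc (k:ℝ) ^ (B + 1) * (t:ℝ) ^ (B + 1) * ((t:ℝ) ^ k - (t:ℝ) ^ (k - (B + 1))) ^ m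
          = ((k:ℝ) ^ (B + 1) * (t:ℝ) ^ (B + 1) * ((t:ℝ) ^ (B + 1) - 1) ^ m)
            * ((t:ℝ) ^ (k - (B + 1))) ^ m := by
            rw [show (t:ℝ) ^ k - (t:ℝ) ^ (k - (B + 1))
                = (t:ℝ) ^ (k - (B + 1)) * ((t:ℝ) ^ (B + 1) - 1) by rw [e1]; ring]
            rw [mul_pow]
            ring
        _ < ((t:ℝ) ^ (B + 1)) ^ m * ((t:ℝ) ^ (k - (B + 1))) ^ m :=
            mul_lt_mul_of_pos_right hmain hpos
        _ = ((t:ℝ) ^ k) ^ m := by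
            rw [← mul_pow, ← pow_add]
            congr 2
            omega
    obtain ⟨f, hf⟩ := exists_good m k (B + 1) t hnum
    exact ⟨fun j u => f u j, fun J hJ a => hf J hJ a⟩
end

section
/- There exists an integer d₀ such that for every integer d ≥ d₀ and every integer B with 1 ≤ B < ln d, defining t = ⌊(d/(2·B·ln d))^{1/(B+1)}⌋ and m = d·t, there exists an indexed family of B·t^t t-labelings of an m-element set that is (B+1)-way qualitatively independent and such that every class of every labeling in the family has at most d elements. -/
open Finset

lemma good_card_lb (k t B : ℕ) [NeZero t] (hk : B + 1 ≤ k)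
    (J : Fin (B+1) → Fin k) (hJ : Function.Injective J) (a : Fin (B+1) → Fin t) :
    t^(k-B) ≤ (univ.filter (fun v : Fin k → Fin t =>
      ∃ x, ∀ ℓ, x + v (J ℓ) = a ℓ)).card := by
  classical
  set goodV := univ.filter (fun v : Fin k → Fin t => ∃ x, ∀ ℓ, x + v (J ℓ) = a ℓ)
    with hgoodV_def
  let f : Fin t × ({i : Fin k // i ∉ Set.range J} → Fin t) → (Fin k → Fin t) :=
    fun p i => if h : ∃ ℓ, J ℓ = i then a h.choose - p.1 else p.2 ⟨i, fun hc => h hc⟩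
  have hfmem : ∀ p, f p ∈ goodV := by
    intro p
    simp only [hgoodV_def, mem_filter, mem_univ, true_and]
    refine ⟨p.1, fun ℓ => ?_⟩
    have h : ∃ ℓ', J ℓ' = J ℓ := ⟨ℓ, rfl⟩
    simp only [f]
    rw [dif_pos h]
    have : h.choose = ℓ := hJ h.choose_spec
    rw [this]
    abel
  have hfinj : Function.Injective f := by
    intro p q hpq
    have hx : p.1 = q.1 := by
      have h0 : ∃ ℓ', J ℓ' = J 0 := ⟨0, rfl⟩
      have h1 := congrFun hpq (J 0)
      simp only [f] at h1
      rw [dif_pos h0, dif_pos h0] at h1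
      exact sub_right_injective h1
    have hw : p.2 = q.2 := by
      funext i
      have h1 := congrFun hpq i.1
      have hni : ¬ ∃ ℓ, J ℓ = i.1 := fun hc => i.2 hc
      simp only [f] at h1
      rw [dif_neg hni, dif_neg hni] at h1
      convert h1 <;> simp
    exact Prod.ext hx hw
  have hle : Fintype.card (Fin t × ({i : Fin k // i ∉ Set.range J} → Fin t))
      ≤ goodV.card := by
    have := Fintype.card_le_of_injective (fun p => (⟨f p, hfmem p⟩ : {v // v ∈ goodV}))
      (fun p q hpq => hfinj (congrArg Subtype.val hpq))
    rwa [Fintype.card_coe] at this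
  have hcard_dom : Fintype.card (Fin t × ({i : Fin k // i ∉ Set.range J} → Fin t))
      = t^(k-B) := by
    have hrange : Fintype.card {i : Fin k // i ∈ Set.range J} = B + 1 := by
      rw [show Fintype.card {i : Fin k // i ∈ Set.range J}
          = Fintype.card (Set.range J) from rfl]
      rw [Set.card_range_of_injective hJ, Fintype.card_fin]
    have hcompl : Fintype.card {i : Fin k // i ∉ Set.range J} = k - (B+1) := by
      rw [Fintype.card_subtype_compl, hrange, Fintype.card_fin]
    simp only [Fintype.card_prod, Fintype.card_fun, hcompl, Fintype.card_fin]
    rw [← pow_succ']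
    congr 1
    omega
  exact hcard_dom ▸ hle

lemma badV_card (k t B : ℕ) [NeZero t] (hk : B + 1 ≤ k)
    (J : Fin (B+1) → Fin k) (hJ : Function.Injective J) (a : Fin (B+1) → Fin t) :
    (univ.filter (fun v : Fin k → Fin t =>
      ¬ ∃ x, ∀ ℓ, x + v (J ℓ) = a ℓ)).card ≤ t^k - t^(k-B) := by
  classical
  have hsplit := Finset.card_filter_add_card_filter_not
    (s := (univ : Finset (Fin k → Fin t)))
    (p := fun v => ∃ x, ∀ ℓ, x + v (J ℓ) = a ℓ)
  have hcardV : (univ : Finset (Fin k → Fin t)).card = t^k := by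
    simp [Fintype.card_fun]
  have hgood := good_card_lb k t B hk J hJ a
  have h1 := Nat.eq_sub_of_add_eq' hsplit
  rw [h1, hcardV]
  exact Nat.sub_le_sub_left hgood _

lemma exists_good_family (k d t B : ℕ) (ht : 2 ≤ t) (hk : B + 1 ≤ k)
    (hnum : k ^ (B+1) * t ^ (B+1) * (t^k - t^(k-B))^d < (t^k)^d) :
    ∃ F : Fin d → Fin k → Fin t, ∀ J : Fin (B+1) → Fin k, Function.Injective J →
      ∀ a : Fin (B+1) → Fin t, ∃ y x, ∀ ℓ, x + F y (J ℓ) = a ℓ := by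
  classical
  haveI : NeZero t := ⟨by omega⟩
  let badV : (Fin (B+1) → Fin k) → (Fin (B+1) → Fin t) → Finset (Fin k → Fin t) :=
    fun J a => univ.filter (fun v => ¬ ∃ x, ∀ ℓ, x + v (J ℓ) = a ℓ)
  let Bad : ((Fin (B+1) → Fin k) × (Fin (B+1) → Fin t)) → Finset (Fin d → Fin k → Fin t) :=
    fun p => Fintype.piFinset (fun _ : Fin d => badV p.1 p.2)
  let P : Finset ((Fin (B+1) → Fin k) × (Fin (B+1) → Fin t)) :=
    univ.filter (fun p => Function.Injective p.1)
  have hcard_union : (P.biUnion Bad).card < (univ : Finset (Fin d → Fin k → Fin t)).card := by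
    have h1 : (P.biUnion Bad).card ≤ ∑ p ∈ P, (Bad p).card := Finset.card_biUnion_le
    have h2 : ∀ p ∈ P, (Bad p).card ≤ (t^k - t^(k-B))^d := by
      intro p hp
      have hpinj : Function.Injective p.1 := by
        simp only [P, mem_filter] at hp; exact hp.2
      have hc : (Bad p).card = (badV p.1 p.2).card ^ d := by
        simp [Bad, Fintype.card_piFinset_const]
      rw [hc]
      exact Nat.pow_le_pow_left (badV_card k t B hk p.1 hpinj p.2) d
    have h3 : ∑ p ∈ P, (Bad p).card ≤ P.card * (t^k - t^(k-B))^d := by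
      calc ∑ p ∈ P, (Bad p).card ≤ ∑ _p ∈ P, (t^k - t^(k-B))^d := Finset.sum_le_sum h2
        _ = P.card * (t^k - t^(k-B))^d := by rw [Finset.sum_const, smul_eq_mul]
    have h4 : P.card ≤ k^(B+1) * t^(B+1) := by
      calc P.card ≤ (univ : Finset ((Fin (B+1) → Fin k) × (Fin (B+1) → Fin t))).card :=
            Finset.card_filter_le _ _
        _ = k^(B+1) * t^(B+1) := by
            simp [Fintype.card_fun]
    have h5 : (univ : Finset (Fin d → Fin k → Fin t)).card = (t^k)^d := by
      simp [Fintype.card_fun]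
    rw [h5]
    calc (P.biUnion Bad).card ≤ P.card * (t^k - t^(k-B))^d := le_trans h1 h3
      _ ≤ k^(B+1) * t^(B+1) * (t^k - t^(k-B))^d := Nat.mul_le_mul_right _ h4
      _ < (t^k)^d := hnum
  have hex : ∃ F : Fin d → Fin k → Fin t, F ∉ P.biUnion Bad := by
    by_contra h
    push_neg at h
    exact absurd (Finset.card_le_card (fun F _ => h F))
      (not_le.mpr hcard_union)
  obtain ⟨F, hF⟩ := hex
  refine ⟨F, fun J hJ a => ?_⟩
  have hmem : (J, a) ∈ P := by simp [P, hJ]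
  have hnotbad : F ∉ Bad (J, a) := fun hc => hF (Finset.mem_biUnion.mpr ⟨(J, a), hmem, hc⟩)
  simp only [Bad, Fintype.mem_piFinset, not_forall] at hnotbad
  obtain ⟨y, hy⟩ := hnotbad
  refine ⟨y, ?_⟩
  simp only [badV, mem_filter, mem_univ, true_and, not_not] at hy
  exact hy

set_option maxHeartbeats 1000000 in
lemma numeric_ineq (d B t k : ℕ) (hd : 2^6000 ≤ d) (hB : 1 ≤ B)
    (hBL : (B:ℝ) < Real.log d)
    (htd : t = ⌊((d:ℝ) / (2 * (B:ℝ) * Real.log d)) ^ ((1:ℝ)/((B:ℝ)+1))⌋₊)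
    (hkd : k = B * t^t) :
    2 ≤ t ∧ k ^ (B+1) * t ^ (B+1) * (t^k - t^(k-B))^d < (t^k)^d := by
  have hdN : (1:ℕ) ≤ d := le_trans (Nat.one_le_two_pow) hd
  have hdR : ((2:ℝ))^(6000:ℕ) ≤ (d:ℝ) := by
    calc ((2:ℝ)^(6000:ℕ)) = ((2^6000 : ℕ) : ℝ) := by push_cast; ring
      _ ≤ d := by exact_mod_cast hd
  clear hd
  have hdpos : (0:ℝ) < d := by exact_mod_cast hdN
  set L := Real.log d with hL_def
  have hlog2l : (0.6931471803:ℝ) < Real.log 2 := Real.log_two_gt_d9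
  have hlog2u : Real.log 2 < 0.6931471808 := Real.log_two_lt_d9
  have hL4000 : (4000:ℝ) ≤ L := by
    have h1 : Real.log ((2:ℝ)^(6000:ℕ)) ≤ L := Real.log_le_log (by positivity) hdR
    rw [Real.log_pow] at h1
    push_cast at h1
    nlinarith
  have hLpos : (0:ℝ) < L := by linarith
  have hBpos : (0:ℝ) < B := by exact_mod_cast hB
  have hBR1 : (1:ℝ) ≤ B := by exact_mod_cast hB
  have hBL' : (B:ℝ) ≤ L := le_of_lt hBL
  have h2BL : (0:ℝ) < 2*(B:ℝ)*L := by positivity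
  set Y := (d:ℝ) / (2*(B:ℝ)*L) with hY_def
  have hYpos : 0 < Y := by positivity
  set X := Y ^ ((1:ℝ)/((B:ℝ)+1)) with hX_def
  have hXpos : 0 < X := Real.rpow_pos_of_pos hYpos _
  have hB1 : ((B:ℝ)+1) ≠ 0 := by positivity
  have hXpow : X ^ (B+1) = Y := by
    rw [hX_def, ← Real.rpow_natCast (Y ^ ((1:ℝ)/((B:ℝ)+1))) (B+1), ← Real.rpow_mul hYpos.le]
    push_cast
    rw [one_div, inv_mul_cancel₀ hB1, Real.rpow_one]
  have hdL : Real.exp L = d := Real.exp_log hdpos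
  -- cube lower bound for exp
  have hexpcube : ∀ x : ℝ, 0 ≤ x → x^3 ≤ Real.exp (3*x) := by
    intro x hx
    have h1 : x + 1 ≤ Real.exp x := Real.add_one_le_exp x
    have h3 : Real.exp (3*x) = Real.exp x ^ 3 := by
      rw [show (3:ℝ)*x = x + x + x by ring, Real.exp_add, Real.exp_add]
      ring
    have h4 : (x+1)^3 ≤ Real.exp x ^ 3 := pow_le_pow_left₀ (by linarith) h1 3
    have h5 : x^3 ≤ (x+1)^3 := pow_le_pow_left₀ hx (by linarith) 3
    rw [h3]
    linarith
  -- t ≥ 2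
  have h2Y : (2:ℝ)^(B+1) ≤ Y := by
    rw [hY_def, le_div_iff₀ h2BL]
    have e1 : (2:ℝ)^(B+1) = Real.exp (((B:ℝ)+1) * Real.log 2) := by
      rw [← Real.rpow_natCast (2:ℝ) (B+1), Real.rpow_def_of_pos (by norm_num)]
      congr 1
      push_cast
      ring
    have e2 : ((B:ℝ)+1) * Real.log 2 ≤ 0.7*(L+1) := by nlinarith
    have e3 : (2:ℝ)*(B:ℝ)*L ≤ 2*L*L := by nlinarith
    have e4 : (2:ℝ)*L*L ≤ Real.exp (0.29*L) := by
      have := hexpcube (0.29*L/3) (by nlinarith)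
      have h29 : (3:ℝ)*(0.29*L/3) = 0.29*L := by ring
      rw [h29] at this
      nlinarith
    calc (2:ℝ)^(B+1) * (2*(B:ℝ)*L) ≤ Real.exp (0.7*(L+1)) * Real.exp (0.29*L) := by
          rw [e1]
          apply mul_le_mul (Real.exp_le_exp.mpr e2) (le_trans e3 e4) (by positivity)
            (Real.exp_pos _).le
      _ = Real.exp (0.99*L + 0.7) := by rw [← Real.exp_add]; ring_nf
      _ ≤ Real.exp L := Real.exp_le_exp.mpr (by nlinarith)
      _ = d := hdL
  have h2X : (2:ℝ) ≤ X := by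
    have e5 : ((2:ℝ)^(B+1) : ℝ) ^ ((1:ℝ)/((B:ℝ)+1)) = 2 := by
      rw [← Real.rpow_natCast (2:ℝ) (B+1), ← Real.rpow_mul (by norm_num : (0:ℝ) ≤ 2)]
      push_cast
      rw [mul_one_div, div_self hB1, Real.rpow_one]
    calc (2:ℝ) = ((2:ℝ)^(B+1) : ℝ) ^ ((1:ℝ)/((B:ℝ)+1)) := e5.symm
      _ ≤ X := Real.rpow_le_rpow (by positivity) h2Y (by positivity)
  have ht2 : 2 ≤ t := by
    rw [htd]
    exact Nat.le_floor (by exact_mod_cast h2X)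
  refine ⟨ht2, ?_⟩
  -- basic facts about t
  have htX : (t:ℝ) ≤ X := by rw [htd]; exact Nat.floor_le hXpos.le
  have htR2 : (2:ℝ) ≤ (t:ℝ) := by exact_mod_cast ht2
  have htpos : (0:ℝ) < t := by linarith
  have htY : (t:ℝ)^(B+1) ≤ Y := by
    calc (t:ℝ)^(B+1) ≤ X^(B+1) := pow_le_pow_left₀ htpos.le htX _
      _ = Y := hXpow
  have hd2 : 2*(B:ℝ)*L*(t:ℝ)^(B+1) ≤ d := by
    have := (le_div_iff₀ h2BL).mp htY
    linarith
  have hYd : Y ≤ d := by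
    rw [hY_def]
    apply div_le_self hdpos.le
    nlinarith
  have hlogt : ((B:ℝ)+1) * Real.log t ≤ L := by
    have h1 : ((t:ℝ))^(B+1) ≤ d := le_trans htY hYd
    have h2 := Real.log_le_log (by positivity) h1
    rw [Real.log_pow] at h2
    push_cast at h2
    exact h2
  have hlogt0 : (0:ℝ) ≤ Real.log t := Real.log_nonneg (by linarith)
  -- the key logarithmic inequality
  have key : ((B:ℝ)+1) * (Real.log B + ((t:ℝ)+1) * Real.log t) < 2*(B:ℝ)*(t:ℝ)*L := by
    have hlogB0 : (0:ℝ) ≤ Real.log B := Real.log_nonneg hBR1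
    have c2 : Real.log B ≤ Real.log L := Real.log_le_log hBpos hBL'
    have c3 : Real.log L ≤ L/100 + 4 := by
      have h1 : Real.log L = Real.log (L/100) + Real.log 100 := by
        rw [← Real.log_mul (by positivity) (by norm_num)]
        congr 1
        field_simp
      have h2 : Real.log (L/100) ≤ L/100 - 1 := Real.log_le_sub_one_of_pos (by positivity)
      have h3 : Real.log (100:ℝ) ≤ 5 := by
        have h4 : Real.log (100:ℝ) ≤ Real.log 128 := Real.log_le_log (by norm_num) (by norm_num)
        have h5 : Real.log (128:ℝ) = 7 * Real.log 2 := by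
          rw [show (128:ℝ) = 2^(7:ℕ) by norm_num, Real.log_pow]
          norm_num
        nlinarith
      linarith
    have c1 : ((B:ℝ)+1) * Real.log B ≤ 2*(B:ℝ)*(L/100+4) := by nlinarith
    have c4 : ((B:ℝ)+1) * (((t:ℝ)+1) * Real.log t) ≤ ((t:ℝ)+1) * L := by nlinarith
    have c5 : 2*(B:ℝ)*(L/100+4) + ((t:ℝ)+1)*L < 2*(B:ℝ)*(t:ℝ)*L := by
      nlinarith [mul_nonneg (sub_nonneg.mpr hBR1) (sub_nonneg.mpr htR2),
        mul_pos hBpos hLpos, mul_pos (mul_pos hBpos htpos) hLpos]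
    nlinarith
  -- now derive the natural number inequality via ℝ
  have hkB1 : B + 1 ≤ k := by
    have h4 : 4 ≤ t^t := by
      calc 4 = 2^2 := by norm_num
        _ ≤ t^2 := Nat.pow_le_pow_left ht2 2
        _ ≤ t^t := Nat.pow_le_pow_right (by omega) ht2
    have : B * 4 ≤ B * t^t := Nat.mul_le_mul_left B h4
    omega
  have hkpos : 0 < k := by omega
  have hsub : t^(k-B) ≤ t^k := Nat.pow_le_pow_right (by omega) (by omega)
  rw [← Nat.cast_lt (α := ℝ)]
  push_cast [hsub]
  set T := (t:ℝ) with hT_def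
  set K := (k:ℝ) with hK_def
  set s := T^B with hs_def
  have hspos : (0:ℝ) < s := by positivity
  have hs2 : (2:ℝ) ≤ s := by
    calc (2:ℝ) = 2^(1:ℕ) := (pow_one 2).symm
      _ ≤ T^(1:ℕ) := pow_le_pow_left₀ (by norm_num) htR2 1
      _ ≤ T^B := pow_le_pow_right₀ (by linarith) hB
  have hfact : T^(k-B) * s = T^k := by
    rw [hs_def, ← pow_add]
    congr 1
    omega
  have hsplit : T^k - T^(k-B) = T^(k-B) * (s - 1) := by
    rw [mul_sub, hfact, mul_one]
  have hKpos : (0:ℝ) < K := by rw [hK_def]; exact_mod_cast hkpos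
  have hKT : (0:ℝ) < K * T := by positivity
  have hKTval : K * T = (B:ℝ) * T^(t+1) := by
    rw [hK_def, hkd]
    push_cast
    ring
  have hlogKT : Real.log (K*T) = Real.log B + ((t:ℝ)+1) * Real.log t := by
    rw [hKTval, Real.log_mul (by positivity) (by positivity), Real.log_pow]
    push_cast
    ring
  have hexp_lt : ((B:ℝ)+1) * Real.log (K*T) < (d:ℝ)/s := by
    rw [hlogKT]
    have h1 : 2*(B:ℝ)*(t:ℝ)*L ≤ (d:ℝ)/s := by
      rw [le_div_iff₀ hspos]
      calc 2*(B:ℝ)*(t:ℝ)*L*s = 2*(B:ℝ)*L*(T^B * T) := by rw [hs_def, hT_def]; ring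
        _ = 2*(B:ℝ)*L*T^(B+1) := by rw [pow_succ]
        _ ≤ d := hd2
    linarith
  have hmain : K^(B+1) * T^(B+1) * (s-1)^d < s^d := by
    have e1 : K^(B+1) * T^(B+1) = Real.exp (((B:ℝ)+1) * Real.log (K*T)) := by
      rw [← mul_pow, ← Real.exp_log hKT, ← Real.exp_nat_mul]
      push_cast
      rw [Real.exp_log hKT]
    have e3 : (s-1)^d ≤ s^d * Real.exp (-((d:ℝ)/s)) := by
      have h1 : s - 1 ≤ s * Real.exp (-(1/s)) := by
        have h2 : 1 - 1/s ≤ Real.exp (-(1/s)) := by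
          have h4 := Real.add_one_le_exp (-(1/s))
          linarith
        calc s - 1 = s * (1 - 1/s) := by field_simp
          _ ≤ s * Real.exp (-(1/s)) := mul_le_mul_of_nonneg_left h2 hspos.le
      calc (s-1)^d ≤ (s * Real.exp (-(1/s)))^d := pow_le_pow_left₀ (by linarith) h1 d
        _ = s^d * Real.exp (-(1/s))^d := mul_pow _ _ _
        _ = s^d * Real.exp (-((d:ℝ)/s)) := by
            rw [← Real.exp_nat_mul]
            congr 1
            ring
    have e4 : Real.exp (((B:ℝ)+1) * Real.log (K*T)) * Real.exp (-((d:ℝ)/s)) < 1 := by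
      rw [← Real.exp_add]
      calc Real.exp (((B:ℝ)+1) * Real.log (K*T) + -((d:ℝ)/s)) < Real.exp 0 :=
            Real.exp_lt_exp.mpr (by linarith)
        _ = 1 := Real.exp_zero
    calc K^(B+1) * T^(B+1) * (s-1)^d
        = Real.exp (((B:ℝ)+1) * Real.log (K*T)) * (s-1)^d := by rw [e1]
      _ ≤ Real.exp (((B:ℝ)+1) * Real.log (K*T)) * (s^d * Real.exp (-((d:ℝ)/s))) := by
          apply mul_le_mul_of_nonneg_left e3 (Real.exp_pos _).le
      _ = s^d * (Real.exp (((B:ℝ)+1) * Real.log (K*T)) * Real.exp (-((d:ℝ)/s))) := by ring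
      _ < s^d * 1 := by
          apply mul_lt_mul_of_pos_left e4 (by positivity)
      _ = s^d := mul_one _
  calc K^(B+1) * T^(B+1) * (T^k - T^(k-B))^d
      = K^(B+1) * T^(B+1) * (T^(k-B) * (s-1))^d := by rw [hsplit]
    _ = (T^(k-B))^d * (K^(B+1) * T^(B+1) * (s-1)^d) := by rw [mul_pow]; ring
    _ < (T^(k-B))^d * s^d := mul_lt_mul_of_pos_left hmain (by positivity)
    _ = (T^(k-B) * s)^d := (mul_pow _ _ _).symm
    _ = (T^k)^d := by rw [hfact]

/-- There exists `d₀` such that for every integer `d ≥ d₀` and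
every integer `B` with `1 ≤ B < ln d`, defining
`t = ⌊(d/(2·B·ln d))^(1/(B+1))⌋` and `m = d·t`, there exists an indexed family
of `B·t^t` `t`-labelings of an `m`-element set that is `(B+1)`-way
qualitatively independent and such that every class of every labeling in the
family has at most `d` elements. -/
theorem stmt_3 :
    ∃ d₀ : ℕ, ∀ d : ℕ, d₀ ≤ d → ∀ B : ℕ, 1 ≤ B → (B : ℝ) < Real.log d →
      ∀ t m : ℕ,
        t = ⌊((d : ℝ) / (2 * (B : ℝ) * Real.log d)) ^ ((1 : ℝ) / ((B : ℝ) + 1))⌋₊ →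
        m = d * t →
        ∃ σ : Fin (B * t ^ t) → Fin m → Fin t,
          (∀ J : Fin (B + 1) → Fin (B * t ^ t), Function.Injective J →
            ∀ a : Fin (B + 1) → Fin t, ∃ u : Fin m, ∀ ℓ : Fin (B + 1), σ (J ℓ) u = a ℓ) ∧
          (∀ j : Fin (B * t ^ t), ∀ a : Fin t,
            (Finset.univ.filter (fun u : Fin m => σ j u = a)).card ≤ d) := by
  classical
  refine ⟨2^6000, fun d hd B hB hBL t m htdef hm => ?_⟩
  obtain ⟨ht2, hnum⟩ := numeric_ineq d B t (B * t^t) hd hB hBL htdef rfl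
  haveI : NeZero t := ⟨by omega⟩
  have hk : B + 1 ≤ B * t^t := by
    have h4 : 4 ≤ t^t := by
      calc 4 = 2^2 := by norm_num
        _ ≤ t^2 := Nat.pow_le_pow_left ht2 2
        _ ≤ t^t := Nat.pow_le_pow_right (by omega) ht2
    have h5 : B * 4 ≤ B * t^t := Nat.mul_le_mul_left B h4
    omega
  obtain ⟨F, hF⟩ := exists_good_family (B * t^t) d t B ht2 hk hnum
  set e : Fin m ≃ Fin d × Fin t := (finCongr hm).trans finProdFinEquiv.symm with he
  refine ⟨fun j u => (e u).2 + F (e u).1 j, ?_, ?_⟩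
  · intro J hJ a
    obtain ⟨y, x, hxy⟩ := hF J hJ a
    refine ⟨e.symm (y, x), fun ℓ => ?_⟩
    dsimp only
    rw [Equiv.apply_symm_apply]
    exact hxy ℓ
  · intro j a
    have hinj : Set.InjOn (fun u => (e u).1)
        ((Finset.univ.filter (fun u : Fin m => (e u).2 + F (e u).1 j = a)) : Finset (Fin m)) := by
      intro u hu u' hu' huv
      dsimp only at huv
      simp only [Finset.mem_coe, Finset.mem_filter, Finset.mem_univ, true_and] at hu hu'
      apply e.injective
      have h2 : (e u).2 = (e u').2 := by
        have := hu.trans hu'.symm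
        rw [huv] at this
        exact add_right_cancel this
      exact Prod.ext huv h2
    calc (Finset.univ.filter (fun u : Fin m => (e u).2 + F (e u).1 j = a)).card
        ≤ (Finset.univ : Finset (Fin d)).card :=
          Finset.card_le_card_of_injOn (fun u => (e u).1)
            (fun u _ => Finset.mem_univ _) hinj
      _ = d := by simp
end

section
/- Let p be a prime, ℓ ≥ 1 an integer, and let C be a set of functions u : {1,…,ℓ} → Z_p with the covering property: for all distinct u, v ∈ C and every s ∈ Z_p there exists i ∈ {1,…,ℓ} with u(i) − v(i) = s in Z_p. Let X = {1,…,ℓ} × Z_p, and for each u ∈ C define the p-labeling σ_u : X → Z_p by σ_u(i, j) = j − u(i) (so the class of σ_u with label a is B_u(a) = {(i, a + u(i)) : i ∈ {1,…,ℓ}}). Then the indexed family (σ_u)_{u ∈ C} is an indexed family of |C| p-labelings of the pℓ-element set X that is 2-way (pairwise) qualitatively independent; each σ_u is a genuine partition of X into p classes of size ℓ each. -/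
/-- AAM covering families give pairwise qualitatively
independent partitions. Let `p` be a prime, `ℓ ≥ 1`, and let `C` be a set of
functions `u : Fin ℓ → ZMod p` with the covering property: for all distinct
`u, v ∈ C` and every `s ∈ ZMod p` there is `i` with `u i - v i = s`. On
`X = Fin ℓ × ZMod p` define, for each `u ∈ C`, the `p`-labeling
`σ_u (i, j) = j - u i`. Then the family `(σ_u)_{u ∈ C}` is pairwise (2-way)
qualitatively independent, `X` has `p·ℓ` elements, and every class of every
`σ_u` has exactly `ℓ` elements. -/
theorem stmt_4 (p : ℕ) (hp : p.Prime) [NeZero p] (ℓ : ℕ) (hℓ : 1 ≤ ℓ)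
    (C : Finset (Fin ℓ → ZMod p))
    (hcov : ∀ u ∈ C, ∀ v ∈ C, u ≠ v → ∀ s : ZMod p, ∃ i : Fin ℓ, u i - v i = s) :
    Fintype.card (Fin ℓ × ZMod p) = p * ℓ ∧
    (∀ u ∈ C, ∀ v ∈ C, u ≠ v → ∀ a b : ZMod p,
      ∃ x : Fin ℓ × ZMod p, x.2 - u x.1 = a ∧ x.2 - v x.1 = b) ∧
    (∀ u ∈ C, ∀ a : ZMod p,
      (Finset.univ.filter (fun x : Fin ℓ × ZMod p => x.2 - u x.1 = a)).card = ℓ) := by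
  refine ⟨?_, ?_, ?_⟩
  · simp [Fintype.card_prod, ZMod.card, Nat.mul_comm]
  · intro u hu v hv huv a b
    obtain ⟨i, hi⟩ := hcov u hu v hv huv (b - a)
    exact ⟨(i, a + u i), by ring_nf, by simp; linear_combination hi⟩
  · intro u hu a
    have : (Finset.univ.filter (fun x : Fin ℓ × ZMod p => x.2 - u x.1 = a))
        = Finset.univ.image (fun i : Fin ℓ => (i, a + u i)) := by
      ext ⟨i, j⟩
      simp only [Finset.mem_filter, Finset.mem_univ, true_and, Finset.mem_image, Prod.mk.injEq]
      constructor
      · intro h; exact ⟨i, rfl, by rw [← h]; ring⟩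
      · rintro ⟨k, rfl, rfl⟩; ring
    rw [this, Finset.card_image_of_injective _ (fun x y h => (Prod.mk.injEq _ _ _ _ ▸ h).1),
      Finset.card_univ, Fintype.card_fin]
end

section
/- Let X_1,…,X_n be independent random variables, each taking values in {0,1}, let X = X_1 + ⋯ + X_n and μ = E[X]. Then P(X ≥ μ/2) ≥ (1/2)·min{1, μ}. -/
/-!
Write `p i = P(X i = 1)`, so that `μ = ∑ p i`. If `μ ≤ 2`, the event `X < μ/2` forces every
`X i` to vanish, which has probability `∏ (1 - p i) ≤ e^{-μ} ≤ 1/(1+μ)`. If `μ ≥ 4`, Cantelli's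
inequality with `Var X ≤ μ` gives `P(X < μ/2) ≤ 4/(4+μ) ≤ 1/2`. In between, `X < μ/2` forces
`X ≤ 1`, and `P(X ≤ 1) ≤ 1/2` is a numerical estimate of
`∏ (1 - p i) + ∑ₖ p k ∏_{j ≠ k} (1 - p j)`: if some `p k ≥ 0.73` it suffices that `X ≤ 1` forces
`X k = 0` or `X = eₖ`; otherwise `1 - p ≤ e^{-p-p²/2}` and `p e^{p+p²/2} ≤ p + 2.36 p²` bound it by
`e^{-μ-D/2} (1 + μ + 2.36 D)` with `D = ∑ p i²`, which is at most `1/2` once `μ ≥ 2`.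
-/

open MeasureTheory ProbabilityTheory Real Finset

lemma one_sub_le_exp_neg_add_sq_div_two {p : ℝ} (h0 : 0 ≤ p) (h1 : p ≤ 1) :
    1 - p ≤ exp (-(p + p ^ 2 / 2)) := by
  rcases h1.eq_or_lt with rfl | h1
  · simpa using (exp_pos _).le
  have hlog : p + p ^ 2 / 2 ≤ -log (1 - p) := by
    have hsum := sum_le_hasSum (range 2) (fun n _ => by positivity)
      (hasSum_pow_div_log_of_abs_lt_one (abs_lt.2 ⟨by linarith, h1⟩))
    norm_num [sum_range_succ] at hsum
    linarith
  calc 1 - p = exp (log (1 - p)) := (exp_log (by linarith)).symm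
    _ ≤ exp (-(p + p ^ 2 / 2)) := exp_le_exp.2 (by linarith)

lemma prod_one_sub_le_exp_neg_sum_add_sq_div_two {ι : Type*} (s : Finset ι) {p : ι → ℝ}
    (h0 : ∀ i, 0 ≤ p i) (h1 : ∀ i, p i ≤ 1) :
    ∏ i ∈ s, (1 - p i) ≤ exp (-∑ i ∈ s, (p i + p i ^ 2 / 2)) := by
  rw [← sum_neg_distrib, exp_sum]
  exact prod_le_prod (fun i _ => sub_nonneg.2 (h1 i))
    fun i _ => one_sub_le_exp_neg_add_sq_div_two (h0 i) (h1 i)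

lemma prod_one_sub_le_exp_neg_sum {ι : Type*} (s : Finset ι) {p : ι → ℝ}
    (h0 : ∀ i, 0 ≤ p i) (h1 : ∀ i, p i ≤ 1) :
    ∏ i ∈ s, (1 - p i) ≤ exp (-∑ i ∈ s, p i) := by
  refine (prod_one_sub_le_exp_neg_sum_add_sq_div_two s h0 h1).trans (exp_le_exp.2 ?_)
  have : ∑ i ∈ s, p i ≤ ∑ i ∈ s, (p i + p i ^ 2 / 2) :=
    sum_le_sum fun i _ => by nlinarith [sq_nonneg (p i)]
  linarith

lemma exp_le_cubic {x : ℝ} (h0 : 0 ≤ x) (h1 : x ≤ 1) :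
    exp x ≤ 1 + x + x ^ 2 / 2 + 11 / 50 * x ^ 3 := by
  have h := exp_bound' h0 h1 (n := 4) (by norm_num)
  norm_num [sum_range_succ, Nat.factorial] at h
  nlinarith [pow_le_pow_of_le_one h0 h1 (show 3 ≤ 4 by norm_num)]

lemma mul_exp_add_sq_div_two_le {p : ℝ} (h0 : 0 ≤ p) (h1 : p ≤ 73 / 100) :
    p * exp (p + p ^ 2 / 2) ≤ p + 59 / 25 * p ^ 2 := by
  set x := p + p ^ 2 / 2 with hx
  have hx1 : x ≤ 1 := by nlinarith
  calc p * exp x ≤ p * (1 + x + x ^ 2 / 2 + 11 / 50 * x ^ 3) :=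
        mul_le_mul_of_nonneg_left (exp_le_cubic (by positivity) hx1) h0
    _ ≤ p + 59 / 25 * p ^ 2 := by
        rw [hx]
        nlinarith [pow_nonneg h0 2, pow_nonneg h0 3, pow_nonneg h0 4, pow_nonneg h0 5,
          pow_nonneg h0 6, pow_nonneg h0 7,
          pow_le_pow_left₀ h0 h1 2, pow_le_pow_left₀ h0 h1 3, pow_le_pow_left₀ h0 h1 4,
          pow_le_pow_left₀ h0 h1 5, pow_le_pow_left₀ h0 h1 6]

lemma exp_two_gt : 7389 / 1000 < exp 2 := by
  have h := exp_one_gt_d9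
  rw [show (2 : ℝ) = 1 + 1 by norm_num, exp_add]
  nlinarith

lemma one_sub_add_mul_exp_sub_le_half {m μ : ℝ} (hm0 : 73 / 100 ≤ m) (hm1 : m ≤ 1)
    (hμ : 2 ≤ μ) : 1 - m + m * exp (m - μ) ≤ 1 / 2 := by
  have hm : 0 ≤ m := by linarith
  have hexp : exp (m - μ) * exp 2 ≤ 1 + m + m ^ 2 / 2 + 11 / 50 * m ^ 3 := by
    rw [← exp_add]
    exact (exp_le_exp.2 (by linarith)).trans (exp_le_cubic hm hm1)
  have h2 := exp_two_gt
  nlinarith [mul_le_mul_of_nonneg_left hexp hm, exp_pos (m - μ),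
    mul_nonneg (sub_nonneg.2 hm0) (sub_nonneg.2 hm1), pow_le_pow_left₀ hm hm1 2,
    pow_le_pow_left₀ hm hm1 3, pow_le_pow_left₀ hm hm1 4]

lemma exp_neg_add_half_mul_le_half {μ D : ℝ} (hμ : 2 ≤ μ) (hD : 0 ≤ D) :
    exp (-(μ + D / 2)) * (1 + μ + 59 / 25 * D) ≤ 1 / 2 := by
  have hμ1 : μ - 1 ≤ exp (μ - 2) := by linarith [add_one_le_exp (μ - 2)]
  have hD4 : 1 + D / 4 ≤ exp (D / 4) := by linarith [add_one_le_exp (D / 4)]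
  have hsplit : exp (μ + D / 2) = exp 2 * exp (μ - 2) * (exp (D / 4) * exp (D / 4)) := by
    rw [← exp_add, ← exp_add, ← exp_add]; ring_nf
  have hlower : 7389 / 1000 * (μ - 1) * ((1 + D / 4) * (1 + D / 4)) ≤ exp (μ + D / 2) := by
    rw [hsplit]
    gcongr
    · linarith
    · exact exp_two_gt.le
  have hpoly : 2 * (1 + μ + 59 / 25 * D) ≤ 7389 / 1000 * (μ - 1) * ((1 + D / 4) * (1 + D / 4)) := by
    nlinarith [sq_nonneg (D - 111 / 100), mul_nonneg (sub_nonneg.2 hμ) hD,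
      mul_nonneg (sub_nonneg.2 hμ) (mul_nonneg hD hD)]
  rw [exp_neg, inv_mul_le_iff₀ (exp_pos _)]
  linarith

lemma prod_one_sub_add_sum_mul_prod_erase_le_half {ι : Type*} [Fintype ι] [DecidableEq ι]
    {p : ι → ℝ} (h0 : ∀ i, 0 ≤ p i) (h1 : ∀ i, p i ≤ 73 / 100) (h2 : 2 ≤ ∑ i, p i) :
    ∏ i, (1 - p i) + ∑ k, p k * ∏ j ∈ univ.erase k, (1 - p j) ≤ 1 / 2 := by
  have h1' : ∀ i, p i ≤ 1 := fun i => (h1 i).trans (by norm_num)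
  set q : ι → ℝ := fun i => p i + p i ^ 2 / 2
  set E := exp (-∑ i, q i)
  have hterm : ∀ k, p k * ∏ j ∈ univ.erase k, (1 - p j) ≤ (p k + 59 / 25 * p k ^ 2) * E := by
    intro k
    have hE : exp (-∑ j ∈ univ.erase k, q j) = exp (q k) * E := by
      rw [← exp_add, ← add_sum_erase univ q (mem_univ k)]; ring_nf
    calc p k * ∏ j ∈ univ.erase k, (1 - p j)
        ≤ p k * (exp (q k) * E) := by
          rw [← hE]
          exact mul_le_mul_of_nonneg_left
            (prod_one_sub_le_exp_neg_sum_add_sq_div_two _ h0 h1') (h0 k)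
      _ ≤ (p k + 59 / 25 * p k ^ 2) * E := by
          rw [← mul_assoc]
          exact mul_le_mul_of_nonneg_right (mul_exp_add_sq_div_two_le (h0 k) (h1 k))
            (exp_pos _).le
  have hq : ∑ i, q i = ∑ i, p i + (∑ i, p i ^ 2) / 2 := by
    rw [sum_add_distrib, sum_div]
  calc ∏ i, (1 - p i) + ∑ k, p k * ∏ j ∈ univ.erase k, (1 - p j)
      ≤ E + ∑ k, (p k + 59 / 25 * p k ^ 2) * E :=
        add_le_add (prod_one_sub_le_exp_neg_sum_add_sq_div_two _ h0 h1')
          (sum_le_sum fun k _ => hterm k)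
    _ = exp (-(∑ i, p i + (∑ i, p i ^ 2) / 2)) * (1 + ∑ i, p i + 59 / 25 * ∑ i, p i ^ 2) := by
        rw [← sum_mul, sum_add_distrib, ← mul_sum, ← hq]; ring
    _ ≤ 1 / 2 := exp_neg_add_half_mul_le_half h2 (sum_nonneg fun i _ => sq_nonneg _)

lemma exp_neg_le_one_sub_half_min {μ : ℝ} (hμ : 0 ≤ μ) : exp (-μ) ≤ 1 - 1 / 2 * min 1 μ := by
  have h : exp (-μ) * (1 + μ) ≤ 1 := by
    rw [exp_neg, inv_mul_le_iff₀ (exp_pos μ), mul_one, add_comm]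
    exact add_one_le_exp μ
  rcases le_total μ 1 with h1 | h1
  · rw [min_eq_right h1]; nlinarith [exp_pos (-μ)]
  · rw [min_eq_left h1]; nlinarith [exp_pos (-μ)]

/-- Cantelli's inequality: Markov's inequality for `(P[Y] + s - Y) ^ 2` with `s = Var[Y] / t`. -/
theorem measureReal_le_integral_sub_le_variance_div {Ω : Type*} [MeasurableSpace Ω]
    {P : Measure Ω} [IsProbabilityMeasure P] {Y : Ω → ℝ} (hY : MemLp Y 2 P) {t : ℝ}
    (ht : 0 < t) : P.real {ω | Y ω ≤ P[Y] - t} ≤ Var[Y; P] / (Var[Y; P] + t ^ 2) := by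
  set v := Var[Y; P]
  set s := v / t
  have hv : 0 ≤ v := variance_nonneg _ _
  have hs : 0 ≤ s := div_nonneg hv ht.le
  set Z : Ω → ℝ := fun ω => P[Y] + s - Y ω
  have hZ : MemLp Z 2 P := (memLp_const _).sub hY
  have hZsq : ∫ ω, Z ω ^ 2 ∂P = v + s ^ 2 := by
    have hmean : P[Z] = s := by
      simp [Z, integral_sub (integrable_const _) (hY.integrable one_le_two)]
    have hvar : Var[Z; P] = v := variance_const_sub hY.aestronglyMeasurable _
    rw [variance_eq_sub hZ, hmean] at hvar
    simp only [Pi.pow_apply] at hvar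
    linarith
  have hmarkov := mul_meas_ge_le_integral_of_nonneg (ae_of_all _ fun ω => sq_nonneg (Z ω))
    (hZ.integrable_sq) ((t + s) ^ 2)
  have hsub : {ω | Y ω ≤ P[Y] - t} ⊆ {ω | (t + s) ^ 2 ≤ Z ω ^ 2} := by
    intro ω (hω : Y ω ≤ P[Y] - t)
    exact pow_le_pow_left₀ (add_nonneg ht.le hs) (show t + s ≤ Z ω by simp only [Z]; linarith) 2
  have hbound : (t + s) ^ 2 * P.real {ω | Y ω ≤ P[Y] - t} ≤ v + s ^ 2 :=
    (mul_le_mul_of_nonneg_left (measureReal_mono hsub) (sq_nonneg _)).trans (hZsq ▸ hmarkov)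
  have hts : t * s = v := mul_div_cancel₀ v ht.ne'
  set q := P.real {ω | Y ω ≤ P[Y] - t}
  have hq : (t ^ 2 + v) * ((t ^ 2 + v) * q) ≤ (t ^ 2 + v) * v := by
    calc (t ^ 2 + v) * ((t ^ 2 + v) * q) = t ^ 2 * ((t + s) ^ 2 * q) := by rw [← hts]; ring
      _ ≤ t ^ 2 * (v + s ^ 2) := mul_le_mul_of_nonneg_left hbound (sq_nonneg t)
      _ = (t ^ 2 + v) * v := by rw [← hts]; ring
  rw [le_div_iff₀ (by positivity)]
  nlinarith [le_of_mul_le_mul_left hq (by positivity : 0 < t ^ 2 + v)]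

lemma eq_zero_of_sum_lt_one {ι : Type*} [Fintype ι] {x : ι → ℝ}
    (h01 : ∀ i, x i = 0 ∨ x i = 1) (hsum : ∑ i, x i < 1) : x = 0 := by
  have hx : ∀ j ∈ univ, 0 ≤ x j := fun j _ => by rcases h01 j with h | h <;> simp [h]
  ext i
  have := single_le_sum hx (mem_univ i)
  rcases h01 i with h | h
  · exact h
  · linarith

lemma eq_single_of_sum_lt_two {ι : Type*} [Fintype ι] [DecidableEq ι] {x : ι → ℝ}
    (h01 : ∀ i, x i = 0 ∨ x i = 1) (hsum : ∑ i, x i < 2) {k : ι} (hk : x k = 1) :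
    x = Pi.single k 1 := by
  have hx : ∀ j ∈ univ, 0 ≤ x j := fun j _ => by rcases h01 j with h | h <;> simp [h]
  ext j
  rcases eq_or_ne j k with rfl | hjk
  · simp [hk]
  have := add_le_sum hx (mem_univ j) (mem_univ k) hjk
  rcases h01 j with h | h
  · simp [h, hjk]
  · linarith

section ZeroOne

variable {Ω ι : Type*} [MeasurableSpace Ω] {P : Measure Ω}

lemma integral_eq_measureReal_eq_one {Y : Ω → ℝ} (hY : Measurable Y)
    (h01 : ∀ ω, Y ω = 0 ∨ Y ω = 1) : ∫ ω, Y ω ∂P = P.real {ω | Y ω = 1} := by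
  have hind : Y = {ω | Y ω = 1}.indicator 1 := by
    ext ω
    rcases h01 ω with h | h <;> simp [Set.indicator, h]
  conv_lhs => rw [hind]
  exact integral_indicator_one (hY (measurableSet_singleton 1))

lemma measureReal_eq_zero_eq_one_sub [IsProbabilityMeasure P] {Y : Ω → ℝ} (hY : Measurable Y)
    (h01 : ∀ ω, Y ω = 0 ∨ Y ω = 1) : P.real {ω | Y ω = 0} = 1 - P.real {ω | Y ω = 1} := by
  have : {ω | Y ω = 0} = {ω | Y ω = 1}ᶜ := by
    ext ω; rcases h01 ω with h | h <;> simp [h]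
  exact this ▸ probReal_compl_eq_one_sub (hY (measurableSet_singleton 1))

lemma memLp_of_zero_or_one [IsFiniteMeasure P] {Y : Ω → ℝ} (hY : Measurable Y)
    (h01 : ∀ ω, Y ω = 0 ∨ Y ω = 1) (q : ENNReal) : MemLp Y q P :=
  MemLp.of_bound hY.aestronglyMeasurable 1
    (ae_of_all _ fun ω => by rcases h01 ω with h | h <;> simp [h])

lemma variance_le_measureReal_eq_one [IsProbabilityMeasure P] {Y : Ω → ℝ} (hY : Measurable Y)
    (h01 : ∀ ω, Y ω = 0 ∨ Y ω = 1) : Var[Y; P] ≤ P.real {ω | Y ω = 1} := by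
  have hBD := variance_le_sub_mul_sub (μ := P) (a := 0) (b := 1)
    (ae_of_all _ fun ω => by rcases h01 ω with h | h <;> simp [h]) hY.aemeasurable
  rw [integral_eq_measureReal_eq_one hY h01] at hBD
  nlinarith [measureReal_nonneg (μ := P) (s := {ω | Y ω = 1})]

lemma measureReal_forall_eq_eq_prod [Fintype ι] {X : ι → Ω → ℝ} (hindep : iIndepFun X P)
    (v : ι → ℝ) : P.real {ω | ∀ i, X i ω = v i} = ∏ i, P.real {ω | X i ω = v i} := by
  have h := hindep.measure_inter_preimage_eq_mul univ (fun i _ => measurableSet_singleton (v i))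
  have hset : {ω | ∀ i, X i ω = v i} = ⋂ i ∈ univ, X i ⁻¹' {v i} := by ext; simp
  rw [measureReal_def, hset, h, ENNReal.toReal_prod]
  rfl

lemma measureReal_forall_eq_zero [IsProbabilityMeasure P] [Fintype ι] {X : ι → Ω → ℝ}
    (hmeas : ∀ i, Measurable (X i)) (h01 : ∀ i ω, X i ω = 0 ∨ X i ω = 1)
    (hindep : iIndepFun X P) :
    P.real {ω | ∀ i, X i ω = 0} = ∏ i, (1 - P.real {ω | X i ω = 1}) := by
  simpa [measureReal_eq_zero_eq_one_sub (hmeas _) (h01 _)] using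
    measureReal_forall_eq_eq_prod hindep 0

lemma measureReal_forall_eq_single [IsProbabilityMeasure P] [Fintype ι] [DecidableEq ι]
    {X : ι → Ω → ℝ} (hmeas : ∀ i, Measurable (X i)) (h01 : ∀ i ω, X i ω = 0 ∨ X i ω = 1)
    (hindep : iIndepFun X P) (k : ι) :
    P.real {ω | ∀ j, X j ω = (Pi.single k 1 : ι → ℝ) j}
      = P.real {ω | X k ω = 1} * ∏ j ∈ univ.erase k, (1 - P.real {ω | X j ω = 1}) := by
  rw [measureReal_forall_eq_eq_prod hindep, ← mul_prod_erase univ _ (mem_univ k),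
    Pi.single_eq_same]
  refine congrArg _ (prod_congr rfl fun j hj => ?_)
  rw [Pi.single_eq_of_ne (ne_of_mem_erase hj), measureReal_eq_zero_eq_one_sub (hmeas j) (h01 j)]

lemma integral_sum_eq_sum_measureReal [IsProbabilityMeasure P] [Fintype ι] {X : ι → Ω → ℝ}
    (hmeas : ∀ i, Measurable (X i)) (h01 : ∀ i ω, X i ω = 0 ∨ X i ω = 1) :
    ∫ ω, ∑ i, X i ω ∂P = ∑ i, P.real {ω | X i ω = 1} := by
  rw [integral_finsetSum _ fun i _ => (memLp_of_zero_or_one (hmeas i) (h01 i) 1).integrable le_rfl]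
  exact sum_congr rfl fun i _ => integral_eq_measureReal_eq_one (hmeas i) (h01 i)

lemma variance_sum_le_sum_measureReal [IsProbabilityMeasure P] [Fintype ι] {X : ι → Ω → ℝ}
    (hmeas : ∀ i, Measurable (X i)) (h01 : ∀ i ω, X i ω = 0 ∨ X i ω = 1)
    (hindep : iIndepFun X P) :
    Var[fun ω => ∑ i, X i ω; P] ≤ ∑ i, P.real {ω | X i ω = 1} := by
  have hsum : (fun ω => ∑ i, X i ω) = ∑ i ∈ univ, X i := by ext; simp
  rw [hsum, IndepFun.variance_sum (fun i _ => memLp_of_zero_or_one (hmeas i) (h01 i) 2)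
    fun i _ j _ hij => hindep.indepFun hij]
  exact sum_le_sum fun i _ => variance_le_measureReal_eq_one (hmeas i) (h01 i)

theorem measureReal_sum_lt_one_le_exp [IsProbabilityMeasure P] [Fintype ι] {X : ι → Ω → ℝ}
    (hmeas : ∀ i, Measurable (X i)) (h01 : ∀ i ω, X i ω = 0 ∨ X i ω = 1)
    (hindep : iIndepFun X P) :
    P.real {ω | ∑ i, X i ω < 1} ≤ exp (-∑ i, P.real {ω | X i ω = 1}) :=
  calc P.real {ω | ∑ i, X i ω < 1}
      ≤ P.real {ω | ∀ i, X i ω = 0} := measureReal_mono fun ω hω =>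
        congrFun (eq_zero_of_sum_lt_one (fun i => h01 i ω) hω)
    _ = ∏ i, (1 - P.real {ω | X i ω = 1}) := measureReal_forall_eq_zero hmeas h01 hindep
    _ ≤ exp (-∑ i, P.real {ω | X i ω = 1}) :=
        prod_one_sub_le_exp_neg_sum _ (fun _ => measureReal_nonneg) fun _ => measureReal_le_one

lemma measureReal_sum_lt_two_le_one_sub_add_mul_prod [IsProbabilityMeasure P] [Fintype ι]
    [DecidableEq ι] {X : ι → Ω → ℝ} (hmeas : ∀ i, Measurable (X i))
    (h01 : ∀ i ω, X i ω = 0 ∨ X i ω = 1) (hindep : iIndepFun X P) (k : ι) :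
    P.real {ω | ∑ i, X i ω < 2} ≤ 1 - P.real {ω | X k ω = 1}
      + P.real {ω | X k ω = 1} * ∏ j ∈ univ.erase k, (1 - P.real {ω | X j ω = 1}) :=
  calc P.real {ω | ∑ i, X i ω < 2}
      ≤ P.real ({ω | X k ω = 0} ∪ {ω | ∀ j, X j ω = (Pi.single k 1 : ι → ℝ) j}) :=
        measureReal_mono fun ω hω =>
          (h01 k ω).imp id fun hk => congrFun (eq_single_of_sum_lt_two (h01 · ω) hω hk)
    _ ≤ _ := measureReal_union_le _ _
    _ = _ := by
        rw [measureReal_eq_zero_eq_one_sub (hmeas k) (h01 k),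
          measureReal_forall_eq_single hmeas h01 hindep k]

lemma measureReal_sum_lt_two_le_prod_add_sum [IsProbabilityMeasure P] [Fintype ι]
    [DecidableEq ι] {X : ι → Ω → ℝ} (hmeas : ∀ i, Measurable (X i))
    (h01 : ∀ i ω, X i ω = 0 ∨ X i ω = 1) (hindep : iIndepFun X P) :
    P.real {ω | ∑ i, X i ω < 2} ≤ ∏ i, (1 - P.real {ω | X i ω = 1})
      + ∑ k, P.real {ω | X k ω = 1} * ∏ j ∈ univ.erase k, (1 - P.real {ω | X j ω = 1}) := by
  set W : ι → Set Ω := fun k => {ω | ∀ j, X j ω = (Pi.single k 1 : ι → ℝ) j}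
  have hsub : {ω | ∑ i, X i ω < 2} ⊆ {ω | ∀ i, X i ω = 0} ∪ ⋃ k, W k := by
    intro ω hω
    by_cases hone : ∃ k, X k ω = 1
    · obtain ⟨k, hk⟩ := hone
      exact Or.inr (Set.mem_iUnion.2 ⟨k, congrFun (eq_single_of_sum_lt_two (h01 · ω) hω hk)⟩)
    · push Not at hone
      exact Or.inl fun i => (h01 i ω).resolve_right (hone i)
  calc P.real {ω | ∑ i, X i ω < 2}
      ≤ P.real {ω | ∀ i, X i ω = 0} + ∑ k, P.real (W k) :=
        (measureReal_mono hsub).trans <|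
          (measureReal_union_le _ _).trans (add_le_add le_rfl (measureReal_iUnion_fintype_le _))
    _ = _ := by
        rw [measureReal_forall_eq_zero hmeas h01 hindep]
        exact congrArg _ (sum_congr rfl fun k _ => measureReal_forall_eq_single hmeas h01 hindep k)

theorem measureReal_sum_lt_two_le_half [IsProbabilityMeasure P] [Fintype ι] {X : ι → Ω → ℝ}
    (hmeas : ∀ i, Measurable (X i)) (h01 : ∀ i ω, X i ω = 0 ∨ X i ω = 1)
    (hindep : iIndepFun X P) (hμ : 2 ≤ ∑ i, P.real {ω | X i ω = 1}) :
    P.real {ω | ∑ i, X i ω < 2} ≤ 1 / 2 := by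
  classical
  set p : ι → ℝ := fun i => P.real {ω | X i ω = 1}
  have hp0 : ∀ i, 0 ≤ p i := fun _ => measureReal_nonneg
  have hp1 : ∀ i, p i ≤ 1 := fun _ => measureReal_le_one
  by_cases hlarge : ∃ k, 73 / 100 ≤ p k
  · obtain ⟨k, hk⟩ := hlarge
    have hrest : ∏ j ∈ univ.erase k, (1 - p j) ≤ exp (p k - ∑ i, p i) := by
      refine (prod_one_sub_le_exp_neg_sum _ hp0 hp1).trans_eq (congrArg exp ?_)
      linarith [add_sum_erase univ p (mem_univ k)]
    calc P.real {ω | ∑ i, X i ω < 2}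
        ≤ 1 - p k + p k * ∏ j ∈ univ.erase k, (1 - p j) :=
          measureReal_sum_lt_two_le_one_sub_add_mul_prod hmeas h01 hindep k
      _ ≤ 1 - p k + p k * exp (p k - ∑ i, p i) := by gcongr
      _ ≤ 1 / 2 := one_sub_add_mul_exp_sub_le_half hk (hp1 k) hμ
  · push Not at hlarge
    exact (measureReal_sum_lt_two_le_prod_add_sum hmeas h01 hindep).trans
      (prod_one_sub_add_sum_mul_prod_erase_le_half hp0 (fun i => (hlarge i).le) hμ)

theorem measureReal_sum_lt_half_le_half_of_four_le [IsProbabilityMeasure P] [Fintype ι]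
    {X : ι → Ω → ℝ} (hmeas : ∀ i, Measurable (X i)) (h01 : ∀ i ω, X i ω = 0 ∨ X i ω = 1)
    (hindep : iIndepFun X P) (hμ : 4 ≤ ∑ i, P.real {ω | X i ω = 1}) :
    P.real {ω | ∑ i, X i ω < (∑ i, P.real {ω | X i ω = 1}) / 2} ≤ 1 / 2 := by
  set μ := ∑ i, P.real {ω | X i ω = 1}
  set v := Var[fun ω => ∑ i, X i ω; P]
  have hmean : P[fun ω => ∑ i, X i ω] = μ := integral_sum_eq_sum_measureReal hmeas h01
  have hv : v ≤ μ := variance_sum_le_sum_measureReal hmeas h01 hindep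
  have hv0 : 0 ≤ v := variance_nonneg _ _
  calc P.real {ω | ∑ i, X i ω < μ / 2}
      ≤ P.real {ω | ∑ i, X i ω ≤ P[fun ω => ∑ i, X i ω] - μ / 2} :=
        by rw [hmean]; exact measureReal_mono (Set.ofPred_subset_ofPred.2 fun ω hω => by linarith)
    _ ≤ v / (v + (μ / 2) ^ 2) :=
        measureReal_le_integral_sub_le_variance_div
          (memLp_finsetSum _ fun i _ => memLp_of_zero_or_one (hmeas i) (h01 i) 2) (by linarith)
    _ ≤ 1 / 2 := by
        rw [div_le_iff₀ (by positivity)]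
        nlinarith

end ZeroOne

/-- Let `X_1, …, X_n` be independent `{0,1}`-valued random
variables, `X = X_1 + ⋯ + X_n` and `μ = E[X]`. Then
`P(X ≥ μ/2) ≥ (1/2)·min{1, μ}`. -/
theorem stmt_5 {Ω : Type*} [MeasureSpace Ω] [IsProbabilityMeasure (ℙ : Measure Ω)]
    (n : ℕ) (X : Fin n → Ω → ℝ)
    (hmeas : ∀ i, Measurable (X i))
    (h01 : ∀ i ω, X i ω = 0 ∨ X i ω = 1)
    (hindep : iIndepFun X ℙ)
    (μ : ℝ) (hμ : μ = ∫ ω, (∑ i, X i ω) ∂ℙ) :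
    ENNReal.ofReal ((1 / 2) * min 1 μ) ≤ ℙ {ω | μ / 2 ≤ ∑ i, X i ω} := by
  have hμp : μ = ∑ i, (ℙ : Measure Ω).real {ω | X i ω = 1} :=
    hμ.trans (integral_sum_eq_sum_measureReal hmeas h01)
  have hμ0 : 0 ≤ μ := hμp ▸ sum_nonneg fun _ _ => measureReal_nonneg
  have hcompl : {ω | μ / 2 ≤ ∑ i, X i ω}ᶜ = {ω | ∑ i, X i ω < μ / 2} := by ext; simp
  suffices h : (ℙ : Measure Ω).real {ω | ∑ i, X i ω < μ / 2} ≤ 1 - 1 / 2 * min 1 μ by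
    rw [ENNReal.ofReal_le_iff_le_toReal (measure_ne_top _ _), ← measureReal_def]
    have := probReal_compl_eq_one_sub (μ := ℙ)
      (measurableSet_le measurable_const (by fun_prop) : MeasurableSet {ω | μ / 2 ≤ ∑ i, X i ω})
    rw [hcompl] at this
    linarith
  rcases le_or_gt μ 2 with hμ2 | hμ2
  · calc (ℙ : Measure Ω).real {ω | ∑ i, X i ω < μ / 2}
        ≤ (ℙ : Measure Ω).real {ω | ∑ i, X i ω < 1} := measureReal_mono
          (Set.ofPred_subset_ofPred.2 fun ω hω => by linarith)
      _ ≤ exp (-μ) := hμp ▸ measureReal_sum_lt_one_le_exp hmeas h01 hindep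
      _ ≤ 1 - 1 / 2 * min 1 μ := exp_neg_le_one_sub_half_min hμ0
  rw [min_eq_left (by linarith)]
  rcases le_or_gt μ 4 with hμ4 | hμ4
  · calc (ℙ : Measure Ω).real {ω | ∑ i, X i ω < μ / 2}
        ≤ (ℙ : Measure Ω).real {ω | ∑ i, X i ω < 2} := measureReal_mono
          (Set.ofPred_subset_ofPred.2 fun ω hω => by linarith)
      _ ≤ 1 - 1 / 2 * 1 := by
          linarith [measureReal_sum_lt_two_le_half hmeas h01 hindep (hμp ▸ hμ2.le)]
  · have := measureReal_sum_lt_half_le_half_of_four_le hmeas h01 hindep (hμp ▸ hμ4.le)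
    rw [← hμp] at this
    linarith
end

section
/- Let U be a finite set, let N ≥ 1, t ≥ 1, B ≥ 1 be integers, and let σ_1,…,σ_N be an indexed family of t-labelings of U that is (B+1)-way qualitatively independent. Let T ⊆ {1,…,N} × {1,…,t} be a set of (group, class) pairs such that every u ∈ U satisfies |{(i,a) ∈ T : σ_i(u) = a}| ≤ B. Then the number of distinct group indices appearing in T, i.e. |{i : ∃ a, (i,a) ∈ T}|, is at most B. -/
/-- feasibility forbids more than `B` groups. Let `U` be a
finite set, `N, t, B ≥ 1` integers, and `σ_1,…,σ_N` an indexed family of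
`t`-labelings of `U` that is `(B+1)`-way qualitatively independent. If
`T ⊆ {1,…,N} × {1,…,t}` is a set of (group, class) pairs such that every
`u ∈ U` lies in at most `B` of the classes chosen by `T`, then `T` touches at
most `B` distinct group indices. -/
theorem stmt_6 {U : Type*} [Fintype U] [DecidableEq U]
    (N t B : ℕ) (hN : 1 ≤ N) (ht : 1 ≤ t) (hB : 1 ≤ B)
    (σ : Fin N → U → Fin t)
    (hQI : ∀ J : Fin (B + 1) → Fin N, Function.Injective J →
      ∀ a : Fin (B + 1) → Fin t, ∃ u : U, ∀ ℓ : Fin (B + 1), σ (J ℓ) u = a ℓ)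
    (T : Finset (Fin N × Fin t))
    (hcap : ∀ u : U, (T.filter (fun p => σ p.1 u = p.2)).card ≤ B) :
    (T.image Prod.fst).card ≤ B := by
  by_contra h
  push_neg at h
  obtain ⟨S, hS, hScard⟩ := Finset.exists_subset_card_eq h
  have e := S.equivFinOfCardEq hScard
  set J : Fin (B + 1) → Fin N := fun ℓ => (e.symm ℓ : Fin N) with hJ
  have hJinj : Function.Injective J := by
    intro x y hxy
    have := Subtype.ext hxy
    exact e.symm.injective this
  have hmem : ∀ ℓ, J ℓ ∈ T.image Prod.fst := fun ℓ => hS (e.symm ℓ).2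
  choose a ha using fun ℓ => Finset.mem_image.mp (hmem ℓ)
  obtain ⟨u, hu⟩ := hQI J hJinj (fun ℓ => (a ℓ).2)
  have hpair : ∀ ℓ, (J ℓ, (a ℓ).2) ∈ T.filter (fun p => σ p.1 u = p.2) := by
    intro ℓ
    refine Finset.mem_filter.mpr ⟨?_, hu ℓ⟩
    obtain ⟨hT, hfst⟩ := ha ℓ
    have : a ℓ = (J ℓ, (a ℓ).2) := by
      ext <;> simp [hfst]
    rwa [this] at hT
  have hle : B + 1 ≤ (T.filter (fun p => σ p.1 u = p.2)).card := by
    have := Finset.card_le_card_of_injOn (s := Finset.univ) (fun ℓ => (J ℓ, (a ℓ).2))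
      (fun ℓ _ => hpair ℓ)
      (fun x _ y _ hxy => hJinj (congrArg Prod.fst hxy))
    simpa using this
  exact absurd (hcap u) (by omega)
end

section
/- Let x be an optimal solution of the ex-ante LP. Then for every buyer b and all values v, v' ∈ 𝒮 with v < v': if x_{b,v} > 0 then x_{b,v'} = q_{b,v'}. In particular, for each buyer b there is at most one value v with 0 < x_{b,v} < q_{b,v}, and the vector (x_{b,v})_{v ∈ 𝒮} (entries ordered by increasing v) consists of a possibly empty prefix of zero entries, followed by at most one entry with 0 < x_{b,v} < q_{b,v}, followed by a possibly empty suffix of entries with x_{b,v} = q_{b,v}. -/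
open Finset

/-- A vector `x` is feasible for the ex-ante LP. -/
def LPFeasible {N M : Type*} [Fintype N] [DecidableEq M] (R : ℕ)
    (S : N → Finset M) (q : N → Fin (R + 1) → ℝ) (c : M → ℝ)
    (x : N → Fin (R + 1) → ℝ) : Prop :=
  (∀ b v, 0 ≤ x b v ∧ x b v ≤ q b v) ∧
  ∀ e : M, ∑ b ∈ Finset.univ.filter (fun b => e ∈ S b), ∑ v, x b v ≤ c e

/-- Objective value of the ex-ante LP. -/
def LPObj {N : Type*} [Fintype N] (R : ℕ) (x : N → Fin (R + 1) → ℝ) : ℝ :=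
  ∑ b, ∑ v, x b v * ((v : ℕ) : ℝ)

/-- per-buyer structure of the optimal LP solution. If `x` is
an optimal solution of the ex-ante LP, then for every buyer `b` and values
`v < v'`: if `x_{b,v} > 0` then `x_{b,v'} = q_{b,v'}`. Consequently the vector
`(x_{b,v})_v` is a prefix of zeros, at most one partially-filled (crucial)
entry, and a suffix of tight entries. -/
theorem stmt_8 {N M : Type*} [Fintype N] [Fintype M] [DecidableEq M]
    (R : ℕ) (hR : 1 ≤ R)
    (S : N → Finset M) (q : N → Fin (R + 1) → ℝ) (c : M → ℝ)
    (hq : ∀ b v, 0 < q b v) (hqsum : ∀ b, ∑ v, q b v = 1) (hc : ∀ e, 0 < c e)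
    (x : N → Fin (R + 1) → ℝ)
    (hfeas : LPFeasible R S q c x)
    (hopt : ∀ y : N → Fin (R + 1) → ℝ, LPFeasible R S q c y →
      LPObj R y ≤ LPObj R x) :
    ∀ b : N, ∀ v v' : Fin (R + 1), v < v' → 0 < x b v → x b v' = q b v' := by
  classical
  intro b v v' hvv' hxv
  by_contra hne
  have hlt : x b v' < q b v' := lt_of_le_of_ne (hfeas.1 b v').2 hne
  set ε : ℝ := min (x b v) (q b v' - x b v') with hεdef
  have hεpos : 0 < ε := lt_min hxv (by linarith)
  have hεv : ε ≤ x b v := min_le_left _ _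
  have hεv' : ε ≤ q b v' - x b v' := min_le_right _ _
  have hvne : v ≠ v' := ne_of_lt hvv'
  set g : Fin (R + 1) → ℝ :=
      Function.update (Function.update (x b) v (x b v - ε)) v' (x b v' + ε) with hgdef
  have hg : ∀ w, g w = x b w + (if w = v' then ε else 0) - (if w = v then ε else 0) := by
    intro w
    by_cases h1 : w = v'
    · subst h1
      rw [hgdef, Function.update_self, if_pos rfl, if_neg (Ne.symm hvne)]
      ring
    · rw [hgdef, Function.update_of_ne h1, if_neg h1]
      by_cases h2 : w = v
      · subst h2
        rw [Function.update_self, if_pos rfl]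
        ring
      · rw [Function.update_of_ne h2, if_neg h2]
        ring
  set y := Function.update x b g with hydef
  have hsum : ∀ φ : Fin (R + 1) → ℝ,
      ∑ w, g w * φ w = (∑ w, x b w * φ w) + ε * φ v' - ε * φ v := by
    intro φ
    have key : ∀ w, g w * φ w =
        x b w * φ w + (if w = v' then ε * φ w else 0) - (if w = v then ε * φ w else 0) := by
      intro w
      rw [hg w]
      split_ifs <;> ring
    simp only [key, Finset.sum_sub_distrib, Finset.sum_add_distrib,
      Finset.sum_ite_eq', Finset.mem_univ, if_true]
  have hyfeas : LPFeasible R S q c y := by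
    constructor
    · intro b' w
      by_cases hb : b' = b
      · rw [hb]
        have h0 := hfeas.1 b w
        simp only [hydef, Function.update_self]
        rw [hg w]
        by_cases h1 : w = v'
        · subst h1
          rw [if_pos rfl, if_neg (Ne.symm hvne)]
          constructor <;> linarith [h0.1]
        · rw [if_neg h1]
          by_cases h2 : w = v
          · subst h2
            rw [if_pos rfl]
            constructor <;> linarith [h0.2]
          · rw [if_neg h2]
            constructor <;> linarith [h0.1, h0.2]
      · simp only [hydef, Function.update_of_ne hb]
        exact hfeas.1 b' w
    · intro e
      have hyb : ∀ b', ∑ w, y b' w = ∑ w, x b' w := by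
        intro b'
        by_cases hb : b' = b
        · rw [hb]
          simp only [hydef, Function.update_self]
          have h := hsum (fun _ => (1 : ℝ))
          simp only [mul_one] at h
          linarith
        · simp [hydef, Function.update_of_ne hb]
      calc ∑ b' ∈ Finset.univ.filter (fun b' => e ∈ S b'), ∑ w, y b' w
          = ∑ b' ∈ Finset.univ.filter (fun b' => e ∈ S b'), ∑ w, x b' w :=
            Finset.sum_congr rfl fun b' _ => hyb b'
        _ ≤ c e := hfeas.2 e
  have hobj : LPObj R x < LPObj R y := by
    have hva : ((v : ℕ) : ℝ) < ((v' : ℕ) : ℝ) := by exact_mod_cast hvv'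
    unfold LPObj
    rw [← Finset.add_sum_erase Finset.univ (fun b' => ∑ w, y b' w * ((w : ℕ) : ℝ))
        (Finset.mem_univ b),
      ← Finset.add_sum_erase Finset.univ (fun b' => ∑ w, x b' w * ((w : ℕ) : ℝ))
        (Finset.mem_univ b)]
    have herase : ∑ b' ∈ Finset.univ.erase b, ∑ w, y b' w * ((w : ℕ) : ℝ)
        = ∑ b' ∈ Finset.univ.erase b, ∑ w, x b' w * ((w : ℕ) : ℝ) := by
      refine Finset.sum_congr rfl fun b' hb' => ?_
      rw [hydef, Function.update_of_ne (Finset.ne_of_mem_erase hb')]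
    rw [herase]
    have hhead : ∑ w, y b w * ((w : ℕ) : ℝ)
        = (∑ w, x b w * ((w : ℕ) : ℝ)) + ε * ((v' : ℕ) : ℝ) - ε * ((v : ℕ) : ℝ) := by
      simp only [hydef, Function.update_self]
      exact hsum _
    rw [hhead]
    nlinarith
  exact absurd (hopt y hyfeas) (not_le.mpr hobj)
end

section
/- Let x be an optimal solution of the ex-ante LP. Then for every bundle S and all values v, v' ∈ 𝒮 with v < v': if x_{S,v} > 0 then x_{S,v'} = q_{S,v'}. In particular, for each bundle S there is at most one value v with 0 < x_{S,v} < q_{S,v}, and the vector (x_{S,v})_{v ∈ 𝒮} (entries ordered by increasing v) consists of a possibly empty prefix of zero entries, followed by at most one entry with 0 < x_{S,v} < q_{S,v}, followed by a possibly empty suffix of entries with x_{S,v} = q_{S,v}. -/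
open Finset

/-- Aggregate of a vector over all buyers demanding the bundle `T`. -/
def bundleSum {N M : Type*} [Fintype N] [DecidableEq M] (R : ℕ)
    (S : N → Finset M) (x : N → Fin (R + 1) → ℝ) (T : Finset M)
    (v : Fin (R + 1)) : ℝ :=
  ∑ b ∈ Finset.univ.filter (fun b => S b = T), x b v

/-- per-bundle structure of the optimal LP solution. If `x`
is an optimal solution of the ex-ante LP, then for every bundle `T` and values
`v < v'`: if `x_{T,v} > 0` then `x_{T,v'} = q_{T,v'}`. Consequently the vector
`(x_{T,v})_v` is a prefix of zeros, at most one partially-filled (crucial)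
entry, and a suffix of tight entries. -/
theorem stmt_9 {N M : Type*} [Fintype N] [Fintype M] [DecidableEq M]
    (R : ℕ) (hR : 1 ≤ R)
    (S : N → Finset M) (q : N → Fin (R + 1) → ℝ) (c : M → ℝ)
    (hq : ∀ b v, 0 < q b v) (hqsum : ∀ b, ∑ v, q b v = 1) (hc : ∀ e, 0 < c e)
    (x : N → Fin (R + 1) → ℝ)
    (hfeas : LPFeasible R S q c x)
    (hopt : ∀ y : N → Fin (R + 1) → ℝ, LPFeasible R S q c y →
      LPObj R y ≤ LPObj R x) :
    ∀ T : Finset M, ∀ v v' : Fin (R + 1), v < v' →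
      0 < bundleSum R S x T v →
      bundleSum R S x T v' = bundleSum R S q T v' := by
  intro T v v' hvv' hpos
  classical
  by_contra hne
  -- there is a buyer b with S b = T and x b v > 0
  obtain ⟨hbd, hcap⟩ := hfeas
  have hex : ∃ b ∈ Finset.univ.filter (fun b => S b = T), 0 < x b v := by
    by_contra h
    push_neg at h
    have : bundleSum R S x T v ≤ 0 := by
      apply Finset.sum_nonpos
      intro b hb; exact h b hb
    linarith
  obtain ⟨b, hbT, hbpos⟩ := hex
  have hbT' : S b = T := (Finset.mem_filter.mp hbT).2
  -- there is a buyer b' with S b' = T and x b' v' < q b' v'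
  have hle : bundleSum R S x T v' ≤ bundleSum R S q T v' :=
    Finset.sum_le_sum (fun a _ => (hbd a v').2)
  have hex' : ∃ b' ∈ Finset.univ.filter (fun b => S b = T), x b' v' < q b' v' := by
    by_contra h
    push_neg at h
    exact hne (le_antisymm hle (Finset.sum_le_sum (fun a ha => h a ha)))
  obtain ⟨b', hbT2, hb'lt⟩ := hex'
  have hbT2' : S b' = T := (Finset.mem_filter.mp hbT2).2
  set ε : ℝ := min (x b v) (q b' v' - x b' v') with hε
  have hεpos : 0 < ε := lt_min hbpos (by linarith)
  have hε1 : ε ≤ x b v := min_le_left _ _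
  have hε2 : ε ≤ q b' v' - x b' v' := min_le_right _ _
  have hvne : v ≠ v' := ne_of_lt hvv'
  set y : N → Fin (R + 1) → ℝ := fun a w =>
    x a w + ((if a = b' ∧ w = v' then ε else 0) - (if a = b ∧ w = v then ε else 0)) with hy
  have hrow : ∀ a, ∑ w, y a w
      = ∑ w, x a w + ((if a = b' then ε else 0) - (if a = b then ε else 0)) := by
    intro a
    simp only [hy, Finset.sum_add_distrib, Finset.sum_sub_distrib]
    congr 1
    congr 1
    · by_cases ha : a = b'
      · simp [ha]
      · simp [ha]
    · by_cases ha : a = b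
      · simp [ha]
      · simp [ha]
  have hyfeas : LPFeasible R S q c y := by
    constructor
    · intro a w
      by_cases h1 : a = b ∧ w = v
      · have : ¬ (a = b' ∧ w = v') := by
          rintro ⟨_, rfl⟩; exact hvne h1.2.symm
        simp only [hy, if_pos h1, if_neg this]
        obtain ⟨rfl, rfl⟩ := h1
        constructor
        · linarith
        · linarith [(hbd a w).2, hεpos]
      · by_cases h2 : a = b' ∧ w = v'
        · simp only [hy, if_pos h2, if_neg h1]
          obtain ⟨rfl, rfl⟩ := h2
          constructor
          · linarith [(hbd a w).1]
          · linarith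
        · simp only [hy, if_neg h1, if_neg h2]
          simpa using hbd a w
    · intro e
      have : ∑ a ∈ Finset.univ.filter (fun a => e ∈ S a), ∑ w, y a w
          = ∑ a ∈ Finset.univ.filter (fun a => e ∈ S a), ∑ w, x a w := by
        simp only [hrow, Finset.sum_add_distrib, Finset.sum_sub_distrib]
        rw [Finset.sum_ite_eq' _ b' (fun _ => ε), Finset.sum_ite_eq' _ b (fun _ => ε)]
        have hmem : b' ∈ Finset.univ.filter (fun a => e ∈ S a)
            ↔ b ∈ Finset.univ.filter (fun a => e ∈ S a) := by
          simp [hbT', hbT2']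
        by_cases he : e ∈ T
        · rw [if_pos, if_pos] <;> simp [hbT', hbT2', he]
        · rw [if_neg, if_neg] <;> simp [hbT', hbT2', he]
      rw [this]; exact hcap e
  have hobj : LPObj R y = LPObj R x + ε * ((v' : ℕ) : ℝ) - ε * ((v : ℕ) : ℝ) := by
    simp only [LPObj, hy, add_mul, sub_mul, Finset.sum_add_distrib, Finset.sum_sub_distrib]
    have h1 : ∀ a, ∑ w, (if a = b' ∧ w = v' then ε else 0) * ((w : ℕ) : ℝ)
        = if a = b' then ε * ((v' : ℕ) : ℝ) else 0 := by
      intro a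
      by_cases ha : a = b'
      · simp [ha]
      · simp [ha]
    have h2 : ∀ a, ∑ w, (if a = b ∧ w = v then ε else 0) * ((w : ℕ) : ℝ)
        = if a = b then ε * ((v : ℕ) : ℝ) else 0 := by
      intro a
      by_cases ha : a = b
      · simp [ha]
      · simp [ha]
    simp only [h1, h2, Finset.sum_ite_eq' Finset.univ b', Finset.sum_ite_eq' Finset.univ b,
      Finset.mem_univ, if_pos]
    ring
  have hlt : LPObj R x < LPObj R y := by
    have hcast : ((v : ℕ) : ℝ) < ((v' : ℕ) : ℝ) := by
      exact_mod_cast (Fin.lt_iff_val_lt_val.mp hvv')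
    nlinarith
  exact absurd (hopt y hyfeas) (not_le.mpr hlt)
end

section
/- Let x be an optimal solution of the ex-ante LP, and let b and b' be two buyers with S_b = S_{b'}. If w, w' ∈ 𝒮 satisfy 0 < x_{b,w} < q_{b,w} and 0 < x_{b',w'} < q_{b',w'}, then w = w'. That is, all crucial values of buyers demanding the same bundle occur at the same value. -/
open Finset

lemma key_aux {N M : Type*} [Fintype N] [Fintype M] [DecidableEq M]
    (R : ℕ)
    (S : N → Finset M) (q : N → Fin (R + 1) → ℝ) (c : M → ℝ)
    (x : N → Fin (R + 1) → ℝ)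
    (hfeas : LPFeasible R S q c x)
    (hopt : ∀ y : N → Fin (R + 1) → ℝ, LPFeasible R S q c y →
      LPObj R y ≤ LPObj R x)
    (b b' : N) (hbb' : S b = S b')
    (w w' : Fin (R + 1))
    (hw : 0 < x b w) (hw' : x b' w' < q b' w')
    (hlt : (w : ℕ) < (w' : ℕ)) : False := by
  classical
  set ε : ℝ := min (x b w) (q b' w' - x b' w') with hεdef
  have hε : 0 < ε := lt_min hw (by linarith)
  have hε1 : ε ≤ x b w := min_le_left _ _
  have hε2 : ε ≤ q b' w' - x b' w' := min_le_right _ _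
  set y : N → Fin (R + 1) → ℝ := fun b₀ v₀ =>
    x b₀ v₀ + (if b₀ = b ∧ v₀ = w then -ε else 0)
      + (if b₀ = b' ∧ v₀ = w' then ε else 0) with hy
  have hsum1 : ∀ b₀, ∑ v, (if b₀ = b ∧ v = w then -ε else 0)
      = if b₀ = b then -ε else 0 := by
    intro b₀
    by_cases hb : b₀ = b <;> simp [hb]
  have hsum2 : ∀ b₀, ∑ v, (if b₀ = b' ∧ v = w' then ε else 0)
      = if b₀ = b' then ε else 0 := by
    intro b₀
    by_cases hb : b₀ = b' <;> simp [hb]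
  have hyfeas : LPFeasible R S q c y := by
    constructor
    · intro b₀ v₀
      obtain ⟨h1, h2⟩ := hfeas.1 b₀ v₀
      by_cases hA : b₀ = b ∧ v₀ = w <;> by_cases hB : b₀ = b' ∧ v₀ = w'
      · obtain ⟨rfl, rfl⟩ := hA
        obtain ⟨hb, hv⟩ := hB
        subst hb; subst hv
        constructor <;> simp [hy] <;> linarith
      · obtain ⟨rfl, rfl⟩ := hA
        constructor <;> simp [hy, hB] <;> linarith
      · obtain ⟨rfl, rfl⟩ := hB
        constructor <;> simp [hy, hA] <;> linarith
      · constructor <;> simp [hy, hA, hB] <;> linarith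
    · intro e
      have hrow : ∀ b₀, ∑ v, y b₀ v = ∑ v, x b₀ v
          + (if b₀ = b then -ε else 0) + (if b₀ = b' then ε else 0) := by
        intro b₀
        simp only [hy]
        rw [Finset.sum_add_distrib, Finset.sum_add_distrib, hsum1, hsum2]
      calc ∑ b₀ ∈ Finset.univ.filter (fun b₀ => e ∈ S b₀), ∑ v, y b₀ v
          = ∑ b₀ ∈ Finset.univ.filter (fun b₀ => e ∈ S b₀), ∑ v, x b₀ v
            + ((if b ∈ Finset.univ.filter (fun b₀ => e ∈ S b₀) then -ε else 0)
              + (if b' ∈ Finset.univ.filter (fun b₀ => e ∈ S b₀) then ε else 0)) := by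
            simp only [hrow]
            rw [Finset.sum_add_distrib, Finset.sum_add_distrib]
            rw [Finset.sum_ite_eq' _ b (fun _ => -ε), Finset.sum_ite_eq' _ b' (fun _ => ε)]
            ring
        _ ≤ c e := by
            have hmem : (b ∈ Finset.univ.filter (fun b₀ => e ∈ S b₀))
                ↔ (b' ∈ Finset.univ.filter (fun b₀ => e ∈ S b₀)) := by
              simp [hbb']
            by_cases hb : b ∈ Finset.univ.filter (fun b₀ => e ∈ S b₀)
            · rw [if_pos hb, if_pos (hmem.mp hb)]
              have := hfeas.2 e
              linarith
            · rw [if_neg hb, if_neg (fun h => hb (hmem.mpr h))]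
              have := hfeas.2 e
              linarith
  have hobj : LPObj R y = LPObj R x + ε * ((w' : ℕ) - (w : ℕ)) := by
    unfold LPObj
    simp only [hy, add_mul]
    rw [Finset.sum_congr rfl (fun b₀ _ => Finset.sum_add_distrib),
        Finset.sum_congr rfl (fun b₀ _ => congrArg (· + _) Finset.sum_add_distrib),
        Finset.sum_add_distrib, Finset.sum_add_distrib]
    have e1 : ∀ b₀ : N, ∑ v, (if b₀ = b ∧ v = w then -ε else 0) * ((v : ℕ) : ℝ)
        = if b₀ = b then -ε * ((w : ℕ) : ℝ) else 0 := by
      intro b₀; by_cases hb : b₀ = b <;> simp [hb, ite_mul]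
    have e2 : ∀ b₀ : N, ∑ v, (if b₀ = b' ∧ v = w' then ε else 0) * ((v : ℕ) : ℝ)
        = if b₀ = b' then ε * ((w' : ℕ) : ℝ) else 0 := by
      intro b₀; by_cases hb : b₀ = b' <;> simp [hb, ite_mul]
    rw [Finset.sum_congr rfl (fun b₀ _ => e1 b₀),
        Finset.sum_congr rfl (fun b₀ _ => e2 b₀),
        Finset.sum_ite_eq' _ b, Finset.sum_ite_eq' _ b']
    simp
    ring
  have hgt : LPObj R x < LPObj R y := by
    rw [hobj]
    have : (0:ℝ) < ε * ((w' : ℕ) - (w : ℕ)) := by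
      apply mul_pos hε
      have : ((w : ℕ) : ℝ) < ((w' : ℕ) : ℝ) := by exact_mod_cast hlt
      linarith
    linarith
  exact absurd (hopt y hyfeas) (not_le.mpr hgt)

/-- uniqueness of the crucial value within a bundle. If `x`
is an optimal solution of the ex-ante LP and buyers `b, b'` demand the same
bundle, then any crucial values `w` of `b` and `w'` of `b'` coincide. -/
theorem stmt_10 {N M : Type*} [Fintype N] [Fintype M] [DecidableEq M]
    (R : ℕ) (hR : 1 ≤ R)
    (S : N → Finset M) (q : N → Fin (R + 1) → ℝ) (c : M → ℝ)
    (hq : ∀ b v, 0 < q b v) (hqsum : ∀ b, ∑ v, q b v = 1) (hc : ∀ e, 0 < c e)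
    (x : N → Fin (R + 1) → ℝ)
    (hfeas : LPFeasible R S q c x)
    (hopt : ∀ y : N → Fin (R + 1) → ℝ, LPFeasible R S q c y →
      LPObj R y ≤ LPObj R x)
    (b b' : N) (hbb' : S b = S b')
    (w w' : Fin (R + 1))
    (hw : 0 < x b w ∧ x b w < q b w)
    (hw' : 0 < x b' w' ∧ x b' w' < q b' w') :
    w = w' := by
  rcases lt_trichotomy (w : ℕ) (w' : ℕ) with h | h | h
  · exact absurd (key_aux R S q c x hfeas hopt b b' hbb' w w' hw.1 hw'.2 h) id
  · exact Fin.ext h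
  · exact absurd (key_aux R S q c x hfeas hopt b' b hbb'.symm w' w hw'.1 hw.2 h) id
end

section
/- Let x be an optimal solution of the ex-ante LP, let S be a bundle, and suppose w ∈ 𝒮 satisfies 0 < x_{S,w} < q_{S,w} (w is a crucial value of S). Then x_{S,v} = 0 for all v ∈ 𝒮 with v < w, and x_{S,v} = q_{S,v} for all v ∈ 𝒮 with v > w. -/
open Finset

lemma exchange {N M : Type*} [Fintype N] [Fintype M] [DecidableEq M]
    (R : ℕ)
    (S : N → Finset M) (q : N → Fin (R + 1) → ℝ) (c : M → ℝ)
    (x : N → Fin (R + 1) → ℝ)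
    (hfeas : (∀ b v, 0 ≤ x b v ∧ x b v ≤ q b v) ∧
      ∀ e : M, ∑ b ∈ Finset.univ.filter (fun b => e ∈ S b), ∑ v, x b v ≤ c e)
    (hopt : ∀ y : N → Fin (R + 1) → ℝ,
      ((∀ b v, 0 ≤ y b v ∧ y b v ≤ q b v) ∧
       ∀ e : M, ∑ b ∈ Finset.univ.filter (fun b => e ∈ S b), ∑ v, y b v ≤ c e) →
      (∑ b, ∑ v', y b v' * ((v' : ℕ) : ℝ)) ≤ ∑ b, ∑ v', x b v' * ((v' : ℕ) : ℝ))
    (T : Finset M) (u v : Fin (R + 1)) (huv : (u : ℕ) < (v : ℕ))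
    (hu : 0 < ∑ b ∈ Finset.univ.filter (fun b => S b = T), x b u)
    (hv : (∑ b ∈ Finset.univ.filter (fun b => S b = T), x b v) <
          ∑ b ∈ Finset.univ.filter (fun b => S b = T), q b v) : False := by
  classical
  have hune : u ≠ v := fun h => absurd (congrArg Fin.val h) huv.ne
  obtain ⟨b1, hb1m, hb1⟩ := Finset.exists_lt_of_sum_lt (by simpa using hu :
    (∑ b ∈ Finset.univ.filter (fun b => S b = T), (0:ℝ)) <
      ∑ b ∈ Finset.univ.filter (fun b => S b = T), x b u)
  obtain ⟨b2, hb2m, hb2⟩ := Finset.exists_lt_of_sum_lt hv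
  have hb1T : S b1 = T := (Finset.mem_filter.mp hb1m).2
  have hb2T : S b2 = T := (Finset.mem_filter.mp hb2m).2
  set ε : ℝ := min (x b1 u) (q b2 v - x b2 v) with hε
  have hεpos : 0 < ε := lt_min hb1 (by linarith)
  have hε1 : ε ≤ x b1 u := min_le_left _ _
  have hε2 : ε ≤ q b2 v - x b2 v := min_le_right _ _
  set y : N → Fin (R + 1) → ℝ := fun b' v' =>
    x b' v' + (if b' = b2 ∧ v' = v then ε else 0) - (if b' = b1 ∧ v' = u then ε else 0)
    with hy
  have hyfeas : (∀ b v, 0 ≤ y b v ∧ y b v ≤ q b v) ∧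
      ∀ e : M, ∑ b ∈ Finset.univ.filter (fun b => e ∈ S b), ∑ v, y b v ≤ c e := by
    constructor
    · intro b' v'
      have hb := hfeas.1 b' v'
      by_cases h1 : b' = b1 ∧ v' = u
      · obtain ⟨rfl, rfl⟩ := h1
        have h2 : ¬ (b' = b2 ∧ v' = v) := fun h => hune h.2
        have hval : y b' v' = x b' v' - ε := by simp [hy, h2]
        rw [hval]
        constructor <;> linarith [hb.1, hb.2]
      · by_cases h2 : b' = b2 ∧ v' = v
        · obtain ⟨rfl, rfl⟩ := h2
          have hval : y b' v' = x b' v' + ε := by simp [hy, h1]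
          rw [hval]
          constructor <;> linarith [hb.1, hb.2]
        · have hval : y b' v' = x b' v' := by simp [hy, h1, h2]
          rw [hval]
          constructor <;> linarith [hb.1, hb.2]
    · intro e
      have hsum : ∀ b', ∑ v', y b' v' =
          (∑ v', x b' v') + (if b' = b2 then ε else 0) - (if b' = b1 then ε else 0) := by
        intro b'
        simp only [hy, Finset.sum_sub_distrib, Finset.sum_add_distrib]
        congr 1
        · congr 1
          by_cases h : b' = b2 <;> simp [h]
        · by_cases h : b' = b1 <;> simp [h]
      calc ∑ b' ∈ Finset.univ.filter (fun b => e ∈ S b), ∑ v', y b' v'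
          = ∑ b' ∈ Finset.univ.filter (fun b => e ∈ S b),
              ((∑ v', x b' v') + (if b' = b2 then ε else 0) - (if b' = b1 then ε else 0)) :=
            Finset.sum_congr rfl (fun b' _ => hsum b')
        _ = (∑ b' ∈ Finset.univ.filter (fun b => e ∈ S b), ∑ v', x b' v')
            + (if b2 ∈ Finset.univ.filter (fun b => e ∈ S b) then ε else 0)
            - (if b1 ∈ Finset.univ.filter (fun b => e ∈ S b) then ε else 0) := by
            rw [Finset.sum_sub_distrib, Finset.sum_add_distrib,
              Finset.sum_ite_eq' _ b2 (fun _ => ε), Finset.sum_ite_eq' _ b1 (fun _ => ε)]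
        _ ≤ c e := by
            have hiff : (b2 ∈ Finset.univ.filter (fun b => e ∈ S b)) ↔
                (b1 ∈ Finset.univ.filter (fun b => e ∈ S b)) := by
              simp [hb1T, hb2T]
            have hce := hfeas.2 e
            by_cases h : b1 ∈ Finset.univ.filter (fun b => e ∈ S b)
            · rw [if_pos (hiff.mpr h), if_pos h]; linarith
            · rw [if_neg (fun hh => h (hiff.mp hh)), if_neg h]; linarith
  have key : ∀ (b0 : N) (v0 : Fin (R + 1)),
      ∑ b, ∑ v', (if b = b0 ∧ v' = v0 then ε else 0) * ((v' : ℕ) : ℝ)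
        = ε * ((v0 : ℕ) : ℝ) := by
    intro b0 v0
    rw [Finset.sum_eq_single b0]
    · rw [Finset.sum_eq_single v0]
      · simp
      · intro v' _ hne; simp [hne]
      · simp
    · intro b' _ hne
      exact Finset.sum_eq_zero fun v' _ => by simp [hne]
    · simp
  have hobj : (∑ b, ∑ v', y b v' * ((v' : ℕ) : ℝ)) =
      (∑ b, ∑ v', x b v' * ((v' : ℕ) : ℝ)) + ε * ((v : ℕ) : ℝ) - ε * ((u : ℕ) : ℝ) := by
    simp only [hy, sub_mul, add_mul, Finset.sum_sub_distrib, Finset.sum_add_distrib,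
      key b2 v, key b1 u]
  have := hopt y hyfeas
  rw [hobj] at this
  have hlt : ε * ((u : ℕ) : ℝ) < ε * ((v : ℕ) : ℝ) := by
    apply mul_lt_mul_of_pos_left _ hεpos
    exact_mod_cast huv
  linarith

/-- structure around a crucial value of a bundle. Let `x` be
an optimal solution of the ex-ante LP, `T` a bundle and `w` a crucial value of
`T`, i.e. `0 < x_{T,w} < q_{T,w}`. Then `x_{T,v} = 0` for all `v < w` and
`x_{T,v} = q_{T,v}` for all `v > w`. -/
theorem stmt_11 {N M : Type*} [Fintype N] [Fintype M] [DecidableEq M]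
    (R : ℕ) (hR : 1 ≤ R)
    (S : N → Finset M) (q : N → Fin (R + 1) → ℝ) (c : M → ℝ)
    (hq : ∀ b v, 0 < q b v) (hqsum : ∀ b, ∑ v, q b v = 1) (hc : ∀ e, 0 < c e)
    (x : N → Fin (R + 1) → ℝ)
    (hfeas : LPFeasible R S q c x)
    (hopt : ∀ y : N → Fin (R + 1) → ℝ, LPFeasible R S q c y →
      LPObj R y ≤ LPObj R x)
    (T : Finset M) (w : Fin (R + 1))
    (hw : 0 < bundleSum R S x T w ∧ bundleSum R S x T w < bundleSum R S q T w) :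
    (∀ v : Fin (R + 1), v < w → bundleSum R S x T v = 0) ∧
    (∀ v : Fin (R + 1), w < v → bundleSum R S x T v = bundleSum R S q T v) := by
  have hxq : ∀ v, bundleSum R S x T v ≤ bundleSum R S q T v := fun v =>
    Finset.sum_le_sum (fun b _ => (hfeas.1 b v).2)
  have hx0 : ∀ v, 0 ≤ bundleSum R S x T v := fun v =>
    Finset.sum_nonneg (fun b _ => (hfeas.1 b v).1)
  constructor
  · intro v hvw
    by_contra h
    have hpos : 0 < bundleSum R S x T v := lt_of_le_of_ne (hx0 v) (Ne.symm h)
    exact exchange R S q c x hfeas hopt T v w hvw hpos hw.2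
  · intro v hwv
    by_contra h
    have hlt : bundleSum R S x T v < bundleSum R S q T v := lt_of_le_of_ne (hxq v) h
    exact exchange R S q c x hfeas hopt T w v hwv hw.1 hlt
end

section
/- Consider the finite product probability space Ω = 𝒮^𝒩 with P(ω) = ∏_{b∈𝒩} q_{b,ω_b} (independent buyer values). Let y : Ω → 𝒩 → {0,1} be any allocation rule such that for every ω ∈ Ω and every item e ∈ ℳ, ∑_{b : e∈S_b} y(ω)(b) ≤ c(e). Then the expected welfare ∑_{ω∈Ω} P(ω) · ∑_{b∈𝒩} y(ω)(b) · ω_b is at most FOPT, the supremum of the objective value over all LP-feasible vectors. In particular, the expected optimal offline welfare OPT satisfies OPT ≤ FOPT. -/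
open Finset

/-- Marginal of a product measure: summing the product over all profiles with
`ω b = v` yields `q b v`. -/
lemma marginal_eq {N : Type*} [Fintype N] [DecidableEq N] (R : ℕ)
    (q : N → Fin (R + 1) → ℝ) (hqsum : ∀ b, ∑ v, q b v = 1) (b : N) (v : Fin (R + 1)) :
    ∑ ω : N → Fin (R + 1), (if ω b = v then ∏ b', q b' (ω b') else 0) = q b v := by
  classical
  have key : ∀ ω : N → Fin (R + 1),
      (if ω b = v then ∏ b', q b' (ω b') else 0)
        = ∏ b', (fun b' w => if b' = b then (if w = v then q b' w else 0) else q b' w) b' (ω b') := by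
    intro ω
    by_cases h : ω b = v
    · simp only [h, if_true]
      apply Finset.prod_congr rfl
      intro b' _
      by_cases hb : b' = b
      · subst hb; simp [h]
      · simp [hb]
    · simp only [h, if_false]
      symm
      apply Finset.prod_eq_zero (Finset.mem_univ b)
      simp [h]
  have hps := Fintype.prod_sum
    (f := fun (b' : N) (w : Fin (R + 1)) => if b' = b then (if w = v then q b' w else 0) else q b' w)
  rw [Finset.sum_congr rfl (fun ω _ => key ω), ← hps]
  rw [Finset.prod_eq_single b]
  · simp
  · intro b' _ hb'
    simp [hb', hqsum b']
  · intro h; exact absurd (Finset.mem_univ b) h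

/-- Total mass of the product measure is 1. -/
lemma total_mass_eq {N : Type*} [Fintype N] [DecidableEq N] (R : ℕ)
    (q : N → Fin (R + 1) → ℝ) (hqsum : ∀ b, ∑ v, q b v = 1) :
    ∑ ω : N → Fin (R + 1), ∏ b, q b (ω b) = 1 := by
  rw [← Fintype.prod_sum]
  simp [hqsum]

/-- `OPT ≤ FOPT`. Consider the product probability space of
value profiles `ω : N → {0,…,R}` with `P(ω) = ∏_b q_{b,ω_b}`. For any
allocation rule `y` assigning to each profile a feasible set of served buyers
(each item `e` used at most `c(e)` times), the expected welfare is at most the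
supremum `FOPT` of the LP objective over all LP-feasible vectors. -/
theorem stmt_12 {N M : Type*} [Fintype N] [DecidableEq N] [Fintype M] [DecidableEq M]
    (R : ℕ) (hR : 1 ≤ R)
    (S : N → Finset M) (q : N → Fin (R + 1) → ℝ) (c : M → ℝ)
    (hq : ∀ b v, 0 < q b v) (hqsum : ∀ b, ∑ v, q b v = 1) (hc : ∀ e, 0 < c e)
    (y : (N → Fin (R + 1)) → Finset N)
    (hy : ∀ ω : N → Fin (R + 1), ∀ e : M,
      ((((y ω).filter (fun b => e ∈ S b)).card : ℝ)) ≤ c e) :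
    ∑ ω : N → Fin (R + 1), (∏ b, q b (ω b)) * ∑ b ∈ y ω, ((ω b : ℕ) : ℝ)
      ≤ sSup {z : ℝ | ∃ x : N → Fin (R + 1) → ℝ,
          LPFeasible R S q c x ∧ LPObj R x = z} := by
  classical
  set P : (N → Fin (R + 1)) → ℝ := fun ω => ∏ b, q b (ω b) with hP
  have hPnn : ∀ ω, 0 ≤ P ω := fun ω => Finset.prod_nonneg fun b _ => (hq b (ω b)).le
  set x : N → Fin (R + 1) → ℝ :=
    fun b v => ∑ ω : N → Fin (R + 1), if ω b = v ∧ b ∈ y ω then P ω else 0 with hxdef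
  have hx_nonneg : ∀ b v, 0 ≤ x b v := by
    intro b v
    apply Finset.sum_nonneg
    intro ω _
    split_ifs
    · exact hPnn ω
    · exact le_rfl
  have hx_le : ∀ b v, x b v ≤ q b v := by
    intro b v
    rw [← marginal_eq R q hqsum b v]
    apply Finset.sum_le_sum
    intro ω _
    by_cases h : ω b = v ∧ b ∈ y ω
    · rw [if_pos h, if_pos h.1]
    · rw [if_neg h]
      split_ifs
      · exact hPnn ω
      · exact le_rfl
  -- row sums
  have hsum_v : ∀ b, ∑ v, x b v = ∑ ω : N → Fin (R + 1), if b ∈ y ω then P ω else 0 := by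
    intro b
    rw [Finset.sum_comm]
    apply Finset.sum_congr rfl
    intro ω _
    by_cases hb : b ∈ y ω
    · simp [hb, Finset.sum_ite_eq]
    · simp [hb]
  -- capacity constraint
  have hcap : ∀ e : M, ∑ b ∈ Finset.univ.filter (fun b => e ∈ S b), ∑ v, x b v ≤ c e := by
    intro e
    calc ∑ b ∈ Finset.univ.filter (fun b => e ∈ S b), ∑ v, x b v
        = ∑ b ∈ Finset.univ.filter (fun b => e ∈ S b),
            ∑ ω : N → Fin (R + 1), if b ∈ y ω then P ω else 0 := by
          exact Finset.sum_congr rfl fun b _ => hsum_v b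
      _ = ∑ ω : N → Fin (R + 1),
            ∑ b ∈ Finset.univ.filter (fun b => e ∈ S b), if b ∈ y ω then P ω else 0 :=
          Finset.sum_comm
      _ = ∑ ω : N → Fin (R + 1), (((y ω).filter (fun b => e ∈ S b)).card : ℝ) * P ω := by
          apply Finset.sum_congr rfl
          intro ω _
          rw [← Finset.sum_filter]
          have hset : ((Finset.univ.filter (fun b => e ∈ S b)).filter (fun b => b ∈ y ω))
              = (y ω).filter (fun b => e ∈ S b) := by
            ext b
            simp [and_comm]
          rw [hset, Finset.sum_const, nsmul_eq_mul]
      _ ≤ ∑ ω : N → Fin (R + 1), c e * P ω := by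
          apply Finset.sum_le_sum
          intro ω _
          exact mul_le_mul_of_nonneg_right (hy ω e) (hPnn ω)
      _ = c e := by
          rw [← Finset.mul_sum, total_mass_eq R q hqsum]
          ring
  have hfeas : LPFeasible R S q c x := ⟨fun b v => ⟨hx_nonneg b v, hx_le b v⟩, hcap⟩
  -- objective equals expected welfare
  have hobj : LPObj R x = ∑ ω : N → Fin (R + 1), P ω * ∑ b ∈ y ω, ((ω b : ℕ) : ℝ) := by
    unfold LPObj
    have step1 : ∀ b : N, ∑ v, x b v * ((v : ℕ) : ℝ)
        = ∑ ω : N → Fin (R + 1), if b ∈ y ω then P ω * ((ω b : ℕ) : ℝ) else 0 := by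
      intro b
      have : ∀ v : Fin (R + 1), x b v * ((v : ℕ) : ℝ)
          = ∑ ω : N → Fin (R + 1), if ω b = v ∧ b ∈ y ω then P ω * ((v : ℕ) : ℝ) else 0 := by
        intro v
        rw [hxdef, Finset.sum_mul]
        apply Finset.sum_congr rfl
        intro ω _
        split_ifs <;> simp
      rw [Finset.sum_congr rfl fun v _ => this v, Finset.sum_comm]
      apply Finset.sum_congr rfl
      intro ω _
      by_cases hb : b ∈ y ω
      · simp [hb, Finset.sum_ite_eq]
      · simp [hb]
    rw [Finset.sum_congr rfl fun b _ => step1 b, Finset.sum_comm]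
    apply Finset.sum_congr rfl
    intro ω _
    rw [← Finset.sum_filter, Finset.filter_mem_eq_inter, Finset.univ_inter,
      Finset.mul_sum]
  -- boundedness of the set
  have hbdd : BddAbove {z : ℝ | ∃ x : N → Fin (R + 1) → ℝ,
      LPFeasible R S q c x ∧ LPObj R x = z} := by
    refine ⟨(Fintype.card N : ℝ) * R, ?_⟩
    rintro z ⟨x', ⟨hx'1, _⟩, rfl⟩
    unfold LPObj
    calc ∑ b, ∑ v, x' b v * ((v : ℕ) : ℝ)
        ≤ ∑ b : N, (R : ℝ) := by
          apply Finset.sum_le_sum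
          intro b _
          calc ∑ v, x' b v * ((v : ℕ) : ℝ)
              ≤ ∑ v, q b v * (R : ℝ) := by
                apply Finset.sum_le_sum
                intro v _
                apply mul_le_mul (hx'1 b v).2 ?_ (Nat.cast_nonneg _) (hq b v).le
                exact_mod_cast Nat.le_of_lt_succ v.isLt
            _ = (R : ℝ) := by rw [← Finset.sum_mul, hqsum b, one_mul]
      _ = (Fintype.card N : ℝ) * R := by
          rw [Finset.sum_const, Finset.card_univ, nsmul_eq_mul]
  rw [← hobj]
  exact le_csSup hbdd ⟨x, hfeas, rfl⟩
end

section
/- Let x be an LP-optimal vector which, among all LP-optimal vectors, minimizes FracWeight(x) + ∑_{e∈ℳ} w_e(x). Let S be a desired bundle and v ∈ 𝒮 a value with x_{S,v} < q_{S,v}. Suppose T_1, …, T_ℓ are desired bundles, pairwise distinct and each distinct from S, whose union contains S, and suppose v_1, …, v_ℓ ∈ 𝒮 satisfy x_{T_i, v_i} > 0 for all i ∈ {1,…,ℓ}. Then v_1 + ⋯ + v_ℓ > v. -/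
open Finset

/-- `x` is an optimal solution of the ex-ante LP. -/
def LPOptimal {N M : Type*} [Fintype N] [DecidableEq M] (R : ℕ)
    (S : N → Finset M) (q : N → Fin (R + 1) → ℝ) (c : M → ℝ)
    (x : N → Fin (R + 1) → ℝ) : Prop :=
  LPFeasible R S q c x ∧
  ∀ y : N → Fin (R + 1) → ℝ, LPFeasible R S q c y → LPObj R y ≤ LPObj R x

/-- Total fractional weight of `x`. -/
def FracWeight {N : Type*} [Fintype N] (R : ℕ) (x : N → Fin (R + 1) → ℝ) : ℝ :=
  ∑ b, ∑ v, x b v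

/-- Fractional load of `x` on item `e`. -/
def itemLoad {N M : Type*} [Fintype N] [DecidableEq M] (R : ℕ)
    (S : N → Finset M) (x : N → Fin (R + 1) → ℝ) (e : M) : ℝ :=
  ∑ b ∈ Finset.univ.filter (fun b => e ∈ S b), ∑ v, x b v

/-- key subadditivity lemma for the normalized LP solution.
Let `x` be an LP-optimal vector minimizing `FracWeight(x) + ∑_e w_e(x)` among
all LP-optimal vectors. Let `T` be a desired bundle and `v` a value with
`x_{T,v} < q_{T,v}`. If `T₁,…,T_ℓ` are desired bundles, pairwise distinct and
each distinct from `T`, whose union contains `T`, and `v₁,…,v_ℓ` are values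
with `x_{Tᵢ,vᵢ} > 0` for all `i`, then `v₁ + ⋯ + v_ℓ > v`. -/
theorem stmt_13 {N M : Type*} [Fintype N] [Fintype M] [DecidableEq M]
    (R : ℕ) (hR : 1 ≤ R)
    (S : N → Finset M) (q : N → Fin (R + 1) → ℝ) (c : M → ℝ)
    (hq : ∀ b v, 0 < q b v) (hqsum : ∀ b, ∑ v, q b v = 1) (hc : ∀ e, 0 < c e)
    (x : N → Fin (R + 1) → ℝ)
    (hopt : LPOptimal R S q c x)
    (hmin : ∀ y : N → Fin (R + 1) → ℝ, LPOptimal R S q c y →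
      FracWeight R x + ∑ e, itemLoad R S x e ≤
        FracWeight R y + ∑ e, itemLoad R S y e)
    (T : Finset M) (hTdes : ∃ b, S b = T)
    (v : Fin (R + 1)) (hv : bundleSum R S x T v < bundleSum R S q T v)
    (ℓ : ℕ) (hℓ : 1 ≤ ℓ)
    (Ti : Fin ℓ → Finset M)
    (hTides : ∀ i, ∃ b, S b = Ti i)
    (hTidist : Function.Injective Ti)
    (hTineT : ∀ i, Ti i ≠ T)
    (hcover : T ⊆ Finset.univ.biUnion Ti)
    (vi : Fin ℓ → Fin (R + 1))
    (hvi : ∀ i, 0 < bundleSum R S x (Ti i) (vi i)) :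
    (v : ℕ) < ∑ i, ((vi i : ℕ)) := by
  classical
  by_contra hcon
  push_neg at hcon
  -- hcon : ∑ i, (vi i : ℕ) ≤ (v : ℕ)
  have hxnn : ∀ b w, 0 ≤ x b w := fun b w => ((hopt.1).1 b w).1
  have hxq : ∀ b w, x b w ≤ q b w := fun b w => ((hopt.1).1 b w).2
  -- find b0 with S b0 = T and x b0 v < q b0 v
  simp only [bundleSum] at hv hvi
  obtain ⟨b0, hb0mem, hb0⟩ := Finset.exists_lt_of_sum_lt hv
  have hSb0 : S b0 = T := (Finset.mem_filter.mp hb0mem).2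
  -- find bi i with S (bi i) = Ti i and 0 < x (bi i) (vi i)
  have hex : ∀ i : Fin ℓ, ∃ b ∈ Finset.univ.filter (fun b => S b = Ti i),
      0 < x b (vi i) := by
    intro i
    refine Finset.exists_lt_of_sum_lt ?_
    simpa using hvi i
  choose bi hbimem hbipos using hex
  have hSbi : ∀ i, S (bi i) = Ti i := fun i => (Finset.mem_filter.mp (hbimem i)).2
  have hbiinj : Function.Injective bi := by
    intro i j hij
    apply hTidist
    rw [← hSbi i, ← hSbi j, hij]
  have hbine : ∀ i, bi i ≠ b0 := by
    intro i h
    exact hTineT i (by rw [← hSbi i, h, hSb0])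
  have hne : (Finset.univ : Finset (Fin ℓ)).Nonempty := ⟨⟨0, hℓ⟩, Finset.mem_univ _⟩
  set δ : ℝ := Finset.univ.inf' hne (fun i => x (bi i) (vi i)) with hδdef
  set ε : ℝ := min (q b0 v - x b0 v) δ with hεdef
  have hεpos : 0 < ε := by
    refine lt_min (by linarith) ?_
    rw [hδdef, Finset.lt_inf'_iff]
    exact fun i _ => hbipos i
  have hεq : ε ≤ q b0 v - x b0 v := min_le_left _ _
  have hεx : ∀ i, ε ≤ x (bi i) (vi i) := fun i =>
    (min_le_right _ _).trans (Finset.inf'_le _ (Finset.mem_univ i))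
  set y : N → Fin (R + 1) → ℝ := fun b w =>
    x b w + (if b = b0 ∧ w = v then ε else 0)
      - ∑ i, (if b = bi i ∧ w = vi i then ε else 0) with hydef
  -- box constraints
  have hbox : ∀ b w, 0 ≤ y b w ∧ y b w ≤ q b w := by
    intro b w
    simp only [hydef]
    by_cases hcase : ∃ i, b = bi i ∧ w = vi i
    · obtain ⟨i0, hbi0, hwi0⟩ := hcase
      have hA : (if b = b0 ∧ w = v then ε else 0) = 0 := by
        rw [if_neg]; rintro ⟨hb, -⟩; exact hbine i0 (hbi0 ▸ hb)
      have hB : ∑ i, (if b = bi i ∧ w = vi i then ε else 0) = ε := by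
        rw [Finset.sum_eq_single i0]
        · rw [if_pos ⟨hbi0, hwi0⟩]
        · intro j _ hj
          rw [if_neg]; rintro ⟨hbj, -⟩
          exact hj (hbiinj (hbj.symm.trans hbi0))
        · exact fun h => absurd (Finset.mem_univ i0) h
      rw [hA, hB, hbi0, hwi0]
      constructor
      · have := hεx i0; linarith
      · have := hxq (bi i0) (vi i0); linarith
    · push_neg at hcase
      have hB : ∑ i, (if b = bi i ∧ w = vi i then ε else 0) = 0 := by
        refine Finset.sum_eq_zero fun i _ => ?_
        rw [if_neg]
        rintro ⟨h1, h2⟩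
        exact hcase i h1 h2
      rw [hB]
      by_cases hA : b = b0 ∧ w = v
      · rw [if_pos hA, hA.1, hA.2]
        constructor
        · have := hxnn b0 v; linarith
        · linarith
      · rw [if_neg hA]
        have := hxnn b w; have := hxq b w
        constructor <;> linarith
  -- row sums
  have hrow : ∀ b, ∑ w, y b w = ∑ w, x b w + ((if b = b0 then ε else 0)
      - ∑ i, (if b = bi i then ε else 0)) := by
    intro b
    simp only [hydef]
    rw [Finset.sum_sub_distrib, Finset.sum_add_distrib]
    have h1 : ∑ w, (if b = b0 ∧ w = v then ε else 0) = (if b = b0 then ε else 0) := by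
      by_cases hb : b = b0 <;> simp [hb]
    have h2 : ∑ w, ∑ i, (if b = bi i ∧ w = vi i then ε else 0)
        = ∑ i, (if b = bi i then ε else 0) := by
      rw [Finset.sum_comm]
      refine Finset.sum_congr rfl fun i _ => ?_
      by_cases hb : b = bi i <;> simp [hb]
    rw [h1, h2]; ring
  -- load change per item
  have hload : ∀ e : M,
      ∑ b ∈ Finset.univ.filter (fun b => e ∈ S b), ∑ w, y b w
        = (∑ b ∈ Finset.univ.filter (fun b => e ∈ S b), ∑ w, x b w)
          + ((if e ∈ T then ε else 0) - ∑ i, (if e ∈ Ti i then ε else 0)) := by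
    intro e
    rw [Finset.sum_congr rfl (fun b _ => hrow b), Finset.sum_add_distrib,
      Finset.sum_sub_distrib]
    congr 2
    · rw [Finset.sum_ite_eq' _ b0 (fun _ => ε)]
      simp [hSb0]
    · rw [Finset.sum_comm]
      refine Finset.sum_congr rfl fun i _ => ?_
      rw [Finset.sum_ite_eq' _ (bi i) (fun _ => ε)]
      simp [hSbi i]
  have hloadle : ∀ e : M,
      (if e ∈ T then ε else 0) - ∑ i, (if e ∈ Ti i then ε else 0) ≤ 0 := by
    intro e
    have hnn : ∀ i ∈ (Finset.univ : Finset (Fin ℓ)),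
        (0:ℝ) ≤ (if e ∈ Ti i then ε else 0) := by
      intro i _; split
      · linarith
      · exact le_refl 0
    by_cases he : e ∈ T
    · obtain ⟨i0, -, hei0⟩ := Finset.mem_biUnion.mp (hcover he)
      have hle : ε ≤ ∑ i, (if e ∈ Ti i then ε else 0) := by
        have := Finset.single_le_sum hnn (Finset.mem_univ i0)
        rwa [if_pos hei0] at this
      rw [if_pos he]; linarith
    · rw [if_neg he]
      have := Finset.sum_nonneg hnn
      linarith
  -- y is feasible
  have hyfeas : LPFeasible R S q c y := by
    refine ⟨hbox, fun e => ?_⟩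
    rw [hload e]
    have := (hopt.1).2 e
    have := hloadle e
    linarith
  -- objective change
  have hobj : LPObj R y = LPObj R x
      + (ε * ((v : ℕ) : ℝ) - ∑ i, ε * (((vi i : ℕ)) : ℝ)) := by
    simp only [LPObj]
    have expand : ∀ b : N, ∑ w, y b w * ((w : ℕ) : ℝ)
        = ∑ w, x b w * ((w : ℕ) : ℝ)
          + ((if b = b0 then ε * ((v : ℕ) : ℝ) else 0)
            - ∑ i, (if b = bi i then ε * (((vi i : ℕ)) : ℝ) else 0)) := by
      intro b
      simp only [hydef, sub_mul, add_mul]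
      rw [Finset.sum_sub_distrib, Finset.sum_add_distrib]
      have h1 : ∑ w, (if b = b0 ∧ w = v then ε else 0) * ((w : ℕ) : ℝ)
          = (if b = b0 then ε * ((v : ℕ) : ℝ) else 0) := by
        by_cases hb : b = b0 <;> simp [hb]
      have h2 : ∑ w, (∑ i, (if b = bi i ∧ w = vi i then ε else 0)) * ((w : ℕ) : ℝ)
          = ∑ i, (if b = bi i then ε * (((vi i : ℕ)) : ℝ) else 0) := by
        rw [Finset.sum_congr rfl (fun w _ => Finset.sum_mul _ _ _), Finset.sum_comm]
        refine Finset.sum_congr rfl fun i _ => ?_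
        by_cases hb : b = bi i <;> simp [hb]
      rw [h1, h2]; ring
    rw [Finset.sum_congr rfl (fun b _ => expand b), Finset.sum_add_distrib]
    congr 1
    rw [Finset.sum_sub_distrib]
    congr 1
    · rw [Finset.sum_ite_eq' _ b0 (fun _ => ε * ((v : ℕ) : ℝ))]; simp
    · rw [Finset.sum_comm]
      refine Finset.sum_congr rfl fun i _ => ?_
      rw [Finset.sum_ite_eq' _ (bi i) (fun _ => ε * (((vi i : ℕ)) : ℝ))]; simp
  -- y is optimal
  have hviv : (∑ i, (((vi i : ℕ)) : ℝ)) ≤ ((v : ℕ) : ℝ) := by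
    exact_mod_cast hcon
  have hobjge : LPObj R x ≤ LPObj R y := by
    rw [hobj, ← Finset.mul_sum]
    nlinarith [hεpos, hviv]
  have hobjeq : LPObj R y = LPObj R x := le_antisymm (hopt.2 y hyfeas) hobjge
  have hyopt : LPOptimal R S q c y :=
    ⟨hyfeas, fun z hz => (hopt.2 z hz).trans hobjeq.symm.le⟩
  -- compute FracWeight y
  have hFW : FracWeight R y = FracWeight R x + (ε - (ℓ : ℝ) * ε) := by
    simp only [FracWeight]
    rw [Finset.sum_congr rfl (fun b _ => hrow b), Finset.sum_add_distrib]
    congr 1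
    rw [Finset.sum_sub_distrib]
    congr 1
    · rw [Finset.sum_ite_eq' _ b0 (fun _ => ε)]; simp
    · rw [Finset.sum_comm]
      rw [Finset.sum_congr rfl (fun i _ => Finset.sum_ite_eq' _ (bi i) (fun _ => ε))]
      simp [Finset.card_univ]
  -- compute total load of y
  have hL : ∑ e, itemLoad R S y e = (∑ e, itemLoad R S x e)
      + (ε * (T.card : ℝ) - ∑ i, ε * ((Ti i).card : ℝ)) := by
    simp only [itemLoad]
    rw [Finset.sum_congr rfl (fun e _ => hload e), Finset.sum_add_distrib]
    congr 1
    rw [Finset.sum_sub_distrib]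
    congr 1
    · rw [Finset.sum_ite_mem]
      simp [mul_comm]
    · rw [Finset.sum_comm]
      refine Finset.sum_congr rfl fun i _ => ?_
      rw [Finset.sum_ite_mem]
      simp [mul_comm]
  -- the cardinality inequality
  have hTcard : T.card ≤ ∑ i, (Ti i).card :=
    (Finset.card_le_card hcover).trans (Finset.card_biUnion_le)
  have hcard : 1 + T.card < ℓ + ∑ i, (Ti i).card := by
    rcases Nat.lt_or_ge 1 ℓ with h2 | h1
    · omega
    · have hℓ1 : ℓ = 1 := le_antisymm h1 hℓ
      subst hℓ1
      have hsub : T ⊆ Ti 0 := by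
        intro e he
        obtain ⟨i, -, hei⟩ := Finset.mem_biUnion.mp (hcover he)
        have : i = 0 := Subsingleton.elim i 0
        rwa [← this]
      have hss : T ⊂ Ti 0 := hsub.ssubset_of_ne (Ne.symm (hTineT 0))
      have := Finset.card_lt_card hss
      rw [Fin.sum_univ_one]
      omega
  -- contradiction with minimality
  have hminy := hmin y hyopt
  rw [hFW, hL] at hminy
  have hε1 : ε * (1 + (T.card : ℝ)) < ε * ((ℓ : ℝ) + ∑ i, ((Ti i).card : ℝ)) := by
    apply mul_lt_mul_of_pos_left _ hεpos
    have : ((1 + T.card : ℕ) : ℝ) < ((ℓ + ∑ i, (Ti i).card : ℕ) : ℝ) := by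
      exact_mod_cast hcard
    push_cast at this
    linarith
  rw [← Finset.mul_sum] at hminy
  nlinarith [hε1, hminy]
end

section
/- For all integers m ≥ 1, B ≥ 1 and c ≥ B, setting γ = e·(20m)^{1/(B+1)}, the series bound ∑_{k=c+1}^{∞} (k − c) · (e·c/(γ·k))^k ≤ 1/(20m) holds. -/
set_option maxHeartbeats 1000000


/-- tail bound on oversold copies. For all integers
`m ≥ 1`, `B ≥ 1` and `c ≥ B`, setting `γ = e·(20m)^(1/(B+1))`, one has
`∑_{k = c+1}^{∞} (k − c) · (e·c/(γ·k))^k ≤ 1/(20m)` (the sum is indexed below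
by `k = c + 1 + j`, `j ∈ ℕ`, so that `k − c = j + 1`). -/
theorem stmt_14 (m B : ℕ) (hm : 1 ≤ m) (hB : 1 ≤ B) (c : ℕ) (hc : B ≤ c)
    (γ : ℝ)
    (hγ : γ = Real.exp 1 * (20 * (m : ℝ)) ^ ((1 : ℝ) / ((B : ℝ) + 1))) :
    ∑' j : ℕ, ((j : ℝ) + 1) *
        (Real.exp 1 * (c : ℝ) / (γ * ((c : ℝ) + 1 + (j : ℝ)))) ^ (c + 1 + j)
      ≤ 1 / (20 * (m : ℝ)) := by
  have he : (0:ℝ) < Real.exp 1 := Real.exp_pos 1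
  have hm1 : (1:ℝ) ≤ (m:ℝ) := by exact_mod_cast hm
  have hA1 : (1:ℝ) ≤ 20 * (m:ℝ) := by nlinarith
  have hA0 : (0:ℝ) < 20 * (m:ℝ) := by linarith
  set s : ℝ := (20 * (m:ℝ)) ^ ((1:ℝ)/((B:ℝ)+1)) with hs
  have hBpos : (0:ℝ) < (B:ℝ) + 1 := by positivity
  have hs1 : (1:ℝ) ≤ s := Real.one_le_rpow hA1 (by positivity)
  have hs0 : (0:ℝ) < s := by linarith
  set x : ℝ := Real.exp (-1) with hx
  have hx0 : (0:ℝ) < x := Real.exp_pos _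
  have hx1 : x < 1 := by
    rw [hx, Real.exp_lt_one_iff]; norm_num
  -- termwise bound
  have key : ∀ j : ℕ, ((j:ℝ)+1) *
      (Real.exp 1 * (c:ℝ) / (γ * ((c:ℝ)+1+(j:ℝ))))^(c+1+j)
      ≤ ((j:ℝ)+1) * x^(j+1) * (1/(20*(m:ℝ))) := by
    intro j
    set k := c + 1 + j with hk
    have hkR : ((c:ℝ)+1+(j:ℝ)) = (k:ℝ) := by push_cast [hk]; ring
    have hk0 : (0:ℝ) < (k:ℝ) := by
      have : 0 < k := by omega
      exact_mod_cast this
    have hbase : Real.exp 1 * (c:ℝ) / (γ * (k:ℝ)) = ((c:ℝ)/(k:ℝ)) * (1/s) := by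
      rw [hγ]
      field_simp
    have h1 : ((c:ℝ)/(k:ℝ))^k ≤ x^(j+1) := by
      have ht : (c:ℝ)/(k:ℝ) = 1 - ((j:ℝ)+1)/(k:ℝ) := by
        field_simp
        push_cast [hk]
        ring
      have hle : (c:ℝ)/(k:ℝ) ≤ Real.exp (-(((j:ℝ)+1)/(k:ℝ))) := by
        rw [ht]
        linarith [Real.add_one_le_exp (-(((j:ℝ)+1)/(k:ℝ)))]
      have hnn : 0 ≤ (c:ℝ)/(k:ℝ) := by positivity
      calc ((c:ℝ)/(k:ℝ))^k ≤ (Real.exp (-(((j:ℝ)+1)/(k:ℝ))))^k :=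
            pow_le_pow_left₀ hnn hle k
        _ = Real.exp ((k:ℝ) * (-(((j:ℝ)+1)/(k:ℝ)))) := (Real.exp_nat_mul _ k).symm
        _ = Real.exp (-((j:ℝ)+1)) := by
            congr 1
            field_simp
        _ = x^(j+1) := by
            rw [hx, ← Real.exp_nat_mul]
            congr 1
            push_cast
            ring
    have h2 : ((1:ℝ)/s)^k ≤ 1/(20*(m:ℝ)) := by
      have hsk : 20 * (m:ℝ) ≤ s^k := by
        have : s^k = (20 * (m:ℝ)) ^ (((1:ℝ)/((B:ℝ)+1)) * (k:ℝ)) := by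
          rw [hs, ← Real.rpow_natCast ((20 * (m:ℝ)) ^ ((1:ℝ)/((B:ℝ)+1))) k,
            ← Real.rpow_mul (le_of_lt hA0)]
        rw [this]
        have hexp : (1:ℝ) ≤ ((1:ℝ)/((B:ℝ)+1)) * (k:ℝ) := by
          rw [one_div, inv_mul_eq_div, le_div_iff₀ hBpos]
          have : (B:ℝ) + 1 ≤ (k:ℝ) := by
            have : B + 1 ≤ k := by omega
            exact_mod_cast this
          linarith
        calc 20 * (m:ℝ) = (20 * (m:ℝ)) ^ (1:ℝ) := (Real.rpow_one _).symm
          _ ≤ (20 * (m:ℝ)) ^ (((1:ℝ)/((B:ℝ)+1)) * (k:ℝ)) :=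
              Real.rpow_le_rpow_of_exponent_le hA1 hexp
      rw [div_pow, one_pow, div_le_div_iff₀ (by positivity) hA0]
      nlinarith [pow_pos hs0 k]
    rw [hkR, hbase, mul_pow, mul_assoc]
    have hj0 : (0:ℝ) ≤ (j:ℝ)+1 := by positivity
    refine mul_le_mul_of_nonneg_left ?_ hj0
    exact mul_le_mul h1 h2 (by positivity) (by positivity)
  -- sum of the geometric-type bound
  have hxnorm : ‖x‖ < 1 := by rw [Real.norm_eq_abs, abs_of_pos hx0]; exact hx1
  have hg : HasSum (fun n : ℕ => (n:ℝ) * x ^ n) (x / (1-x)^2) :=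
    hasSum_coe_mul_geometric_of_norm_lt_one hxnorm
  have hg' : HasSum (fun j : ℕ => ((j:ℝ)+1) * x ^ (j+1)) (x / (1-x)^2) := by
    have h0 : HasSum (fun n : ℕ => ((n+1:ℕ):ℝ) * x ^ (n+1)) (x/(1-x)^2) := by
      refine (hasSum_nat_add_iff (f := fun n : ℕ => (n:ℝ) * x ^ n) 1).2 ?_
      simpa using hg
    refine h0.congr_fun ?_
    intro n; push_cast; ring
  have hG : HasSum (fun j : ℕ => ((j:ℝ)+1) * x ^ (j+1) * (1/(20*(m:ℝ))))
      ((x / (1-x)^2) * (1/(20*(m:ℝ)))) := hg'.mul_right _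
  have hnonneg : ∀ j : ℕ, 0 ≤ ((j:ℝ)+1) *
      (Real.exp 1 * (c:ℝ) / (γ * ((c:ℝ)+1+(j:ℝ))))^(c+1+j) := by
    intro j
    have hb : 0 ≤ Real.exp 1 * (c:ℝ) / (γ * ((c:ℝ)+1+(j:ℝ))) := by
      rw [hγ]; positivity
    positivity
  have hsumm : Summable (fun j : ℕ => ((j:ℝ)+1) *
      (Real.exp 1 * (c:ℝ) / (γ * ((c:ℝ)+1+(j:ℝ))))^(c+1+j)) :=
    Summable.of_nonneg_of_le hnonneg key hG.summable
  calc ∑' j : ℕ, ((j:ℝ)+1) *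
        (Real.exp 1 * (c:ℝ) / (γ * ((c:ℝ)+1+(j:ℝ))))^(c+1+j)
      ≤ ∑' j : ℕ, ((j:ℝ)+1) * x ^ (j+1) * (1/(20*(m:ℝ))) :=
        Summable.tsum_le_tsum key hsumm hG.summable
    _ = (x / (1-x)^2) * (1/(20*(m:ℝ))) := hG.tsum_eq
    _ ≤ 1 * (1/(20*(m:ℝ))) := by
        refine mul_le_mul_of_nonneg_right ?_ (by positivity)
        have h1x : (0:ℝ) < 1 - x := by linarith
        rw [div_le_one (by positivity)]
        have hmul : x * Real.exp 1 = 1 := by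
          rw [hx, ← Real.exp_add]; norm_num
        have e1 : (2.7182818283:ℝ) < Real.exp 1 := Real.exp_one_gt_d9
        have e2 : Real.exp 1 < 2.7182818286 := Real.exp_one_lt_d9
        nlinarith [sq_nonneg (1-x), hx0.le]
    _ = 1 / (20*(m:ℝ)) := one_mul _
end

section
/- Let n = d·t with integers d, t ≥ 1, let r ≥ 1 be an integer, and let A_1, …, A_r be mutually independent random subsets of an n-element set U, each distributed uniformly over the d-element subsets of U. Then P(A_1 ∩ ⋯ ∩ A_r = ∅) ≤ (1 − 1/t^r)^n. -/
/-!
Write `E(x) = E[x ^ #(A₁ ∩ ⋯ ∩ Aᵣ)]` for `0 ≤ x ≤ 1`; the probability of an empty intersection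
is `E(0)`. For a fixed set `T` and a uniform `e`-subset `A` of an `m`-set, the events `u ∈ A` are
negatively correlated, so `E[x ^ #(T ∩ A)] ≤ (1 - (1 - x) e / m) ^ #T`, the value for independent
events of probability `e / m`. This is shown by adding the elements `u` of `T` one at a time: the
sets containing `u` meet the rest of `T` in fewer elements on average than those avoiding `u`,
which is the double-counting fact that averages of an antitone set function over `k`-subsets
decrease in `k`. Conditioning on `A₁, …, Aᵣ₋₁` and iterating `x ↦ 1 - (1 - x) / t` then gives
`E(x) ≤ (1 - (1 - x) / t ^ r) ^ n`.
-/

open Finset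

section

variable {α : Type*} [DecidableEq α]

theorem Antitone.succ_mul_sum_powersetCard_succ_le {f : Finset α → ℝ} (hf : Antitone f)
    (W : Finset α) (k : ℕ) :
    (k + 1 : ℝ) * ∑ b ∈ W.powersetCard (k + 1), f b
      ≤ (#W - k : ℝ) * ∑ a ∈ W.powersetCard k, f a := by
  have hpairs : ∑ b ∈ W.powersetCard (k + 1), ∑ v ∈ b, f (b.erase v)
      = ∑ a ∈ W.powersetCard k, ∑ _v ∈ W \ a, f a := by
    rw [sum_sigma', sum_sigma']
    refine sum_bij' (fun p _ => ⟨p.1.erase p.2, p.2⟩) (fun p _ => ⟨insert p.2 p.1, p.2⟩)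
      ?_ ?_ ?_ ?_ fun _ _ => rfl
    · simp only [mem_sigma, mem_powersetCard, mem_sdiff]
      rintro ⟨b, v⟩ ⟨⟨hbW, hbk⟩, hvb⟩
      exact ⟨⟨(erase_subset v b).trans hbW, by simp [card_erase_of_mem hvb, hbk]⟩, hbW hvb,
        notMem_erase v b⟩
    · simp only [mem_sigma, mem_powersetCard, mem_sdiff]
      rintro ⟨a, v⟩ ⟨⟨haW, hak⟩, hvW, hva⟩
      exact ⟨⟨insert_subset hvW haW, by simp [card_insert_of_notMem hva, hak]⟩, mem_insert_self v a⟩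
    · rintro ⟨b, v⟩ hbv
      simp [insert_erase (mem_sigma.1 hbv).2]
    · rintro ⟨a, v⟩ hav
      simp [erase_insert (mem_sdiff.1 (mem_sigma.1 hav).2).2]
  calc (k + 1 : ℝ) * ∑ b ∈ W.powersetCard (k + 1), f b
      = ∑ b ∈ W.powersetCard (k + 1), ∑ _v ∈ b, f b := by
        rw [mul_sum]
        refine sum_congr rfl fun b hb => ?_
        rw [sum_const, (mem_powersetCard.1 hb).2, nsmul_eq_mul]; push_cast; ring
    _ ≤ ∑ b ∈ W.powersetCard (k + 1), ∑ v ∈ b, f (b.erase v) :=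
        sum_le_sum fun b _ => sum_le_sum fun v _ => hf (erase_subset v b)
    _ = ∑ a ∈ W.powersetCard k, ∑ _v ∈ W \ a, f a := hpairs
    _ = (#W - k : ℝ) * ∑ a ∈ W.powersetCard k, f a := by
        rw [mul_sum]
        refine sum_congr rfl fun a ha => ?_
        obtain ⟨haW, hak⟩ := mem_powersetCard.1 ha
        rw [sum_const, card_sdiff_of_subset haW, nsmul_eq_mul,
          Nat.cast_sub (hak ▸ card_le_card haW), hak]

theorem Finset.sum_powersetCard_succ_insert {M : Type*} [AddCommMonoid M] {u : α} {W : Finset α}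
    (hu : u ∉ W) (k : ℕ) (g : Finset α → M) :
    ∑ a ∈ (insert u W).powersetCard (k + 1), g a
      = ∑ a ∈ W.powersetCard (k + 1), g a + ∑ a ∈ W.powersetCard k, g (insert u a) := by
  have hnot : ∀ a ∈ W.powersetCard k, u ∉ a := fun a ha h => hu ((mem_powersetCard.1 ha).1 h)
  rw [powersetCard_succ_insert hu, sum_union, sum_image]
  · exact fun a ha b hb h => by
      rw [← erase_insert (hnot a ha), ← erase_insert (hnot b hb), h]
  · refine disjoint_left.2 fun a ha hb => ?_
    obtain ⟨b, -, rfl⟩ := mem_image.1 hb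
    exact hu ((mem_powersetCard.1 ha).1 (mem_insert_self u b))

theorem sum_pow_card_insert_inter_powersetCard_le {V S : Finset α} {u : α} (huV : u ∈ V)
    (huS : u ∉ S) (k : ℕ) {x : ℝ} (hx0 : 0 ≤ x) (hx1 : x ≤ 1) :
    ∑ a ∈ V.powersetCard (k + 1), x ^ #(insert u S ∩ a)
      ≤ (1 - (1 - x) * ((k + 1) / #V)) * ∑ a ∈ V.powersetCard (k + 1), x ^ #(S ∩ a) := by
  set W := V.erase u
  have huW : u ∉ W := notMem_erase u V
  have hcard : (#V : ℝ) = #W + 1 := by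
    rw [card_erase_of_mem huV, Nat.cast_sub (card_pos.2 ⟨u, huV⟩)]; ring
  rw [← insert_erase huV, sum_powersetCard_succ_insert huW, sum_powersetCard_succ_insert huW,
    insert_erase huV]
  have hnot : ∀ a ∈ W.powersetCard k, u ∉ a := fun a ha h => huW ((mem_powersetCard.1 ha).1 h)
  set A₀ := ∑ a ∈ W.powersetCard (k + 1), x ^ #(S ∩ a)
  set A₁ := ∑ a ∈ W.powersetCard k, x ^ #(S ∩ a)
  have h₀ : ∑ a ∈ W.powersetCard (k + 1), x ^ #(insert u S ∩ a) = A₀ :=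
    sum_congr rfl fun a ha => by
      rw [insert_inter_of_notMem fun h => huW ((mem_powersetCard.1 ha).1 h)]
  have h₁ : ∑ a ∈ W.powersetCard k, x ^ #(insert u S ∩ insert u a) = x * A₁ := by
    rw [mul_sum]
    refine sum_congr rfl fun a ha => ?_
    rw [← insert_inter_distrib, card_insert_of_notMem fun h => hnot a ha (mem_inter.1 h).2,
      pow_succ']
  have h₂ : ∑ a ∈ W.powersetCard k, x ^ #(S ∩ insert u a) = A₁ :=
    sum_congr rfl fun a _ => by rw [inter_insert_of_notMem huS]
  have haverage : (k + 1 : ℝ) * A₀ ≤ (#W - k : ℝ) * A₁ :=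
    Antitone.succ_mul_sum_powersetCard_succ_le
      (fun a b hab => pow_le_pow_of_le_one hx0 hx1 (card_le_card (inter_subset_inter_left hab)))
      W k
  rw [h₀, h₁, h₂, hcard]
  have hgap : (1 - (1 - x) * ((k + 1) / (#W + 1))) * (A₀ + A₁) - (A₀ + x * A₁)
      = (1 - x) * ((#W - k) * A₁ - (k + 1) * A₀) / (#W + 1) := by
    field_simp
    ring
  have hgap_nonneg : 0 ≤ (1 - x) * ((#W - k) * A₁ - (k + 1) * A₀) / (#W + 1) :=
    div_nonneg (mul_nonneg (by linarith) (by linarith)) (by positivity)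
  linarith

theorem sum_pow_card_inter_powersetCard_le {V S : Finset α} (hSV : S ⊆ V) {e : ℕ} (he : e ≤ #V)
    {x : ℝ} (hx0 : 0 ≤ x) (hx1 : x ≤ 1) :
    ∑ a ∈ V.powersetCard e, x ^ #(S ∩ a) ≤ (#V).choose e * (1 - (1 - x) * (e / #V)) ^ #S := by
  obtain _ | k := e
  · simp
  have hF : 0 ≤ 1 - (1 - x) * ((k + 1 : ℕ) / #V : ℝ) := by
    have : ((k + 1 : ℕ) / #V : ℝ) ≤ 1 :=
      div_le_one_of_le₀ (by exact_mod_cast he) (Nat.cast_nonneg _)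
    nlinarith
  induction S using Finset.induction_on with
  | empty => simp [card_powersetCard]
  | insert u S huS ih =>
    obtain ⟨huV, hSV⟩ := insert_subset_iff.1 hSV
    calc ∑ a ∈ V.powersetCard (k + 1), x ^ #(insert u S ∩ a)
        ≤ (1 - (1 - x) * ((k + 1 : ℕ) / #V)) * ∑ a ∈ V.powersetCard (k + 1), x ^ #(S ∩ a) := by
          exact_mod_cast sum_pow_card_insert_inter_powersetCard_le huV huS k hx0 hx1
      _ ≤ (1 - (1 - x) * ((k + 1 : ℕ) / #V)) *
            ((#V).choose (k + 1) * (1 - (1 - x) * ((k + 1 : ℕ) / #V)) ^ #S) :=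
          mul_le_mul_of_nonneg_left (ih hSV) hF
      _ = (#V).choose (k + 1) * (1 - (1 - x) * ((k + 1 : ℕ) / #V)) ^ #(insert u S) := by
          rw [card_insert_of_notMem huS]; ring

end

theorem card_filter_eq_empty_eq_sum_zero_pow {ι β : Type*} (s : Finset ι) (T : ι → Finset β)
    [DecidablePred fun i => T i = ∅] :
    (#(s.filter fun i => T i = ∅) : ℝ) = ∑ i ∈ s, (0 : ℝ) ^ #(T i) := by
  simp [zero_pow_eq, sum_boole]

section

variable {α : Type*} [DecidableEq α] [Fintype α]

theorem sum_pow_card_common_le {e : ℕ} (he : e ≤ Fintype.card α) (r : ℕ) {x : ℝ} (hx0 : 0 ≤ x)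
    (hx1 : x ≤ 1) :
    ∑ A : Fin r → {s : Finset α // #s = e}, x ^ #{u | ∀ i, u ∈ (A i).1}
      ≤ (Fintype.card {s : Finset α // #s = e} : ℝ) ^ r
          * (1 - (1 - x) * (e / Fintype.card α) ^ r) ^ Fintype.card α := by
  set p : ℝ := e / Fintype.card α
  have hp0 : 0 ≤ p := by positivity
  have hp1 : p ≤ 1 := div_le_one_of_le₀ (by exact_mod_cast he) (Nat.cast_nonneg _)
  induction r generalizing x with
  | zero => simp
  | succ r ih =>
    set C : ℝ := (Fintype.card {s : Finset α // #s = e} : ℝ)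
    set y := 1 - (1 - x) * p
    have hsplit : ∑ A : Fin (r + 1) → {s : Finset α // #s = e}, x ^ #{u | ∀ i, u ∈ (A i).1}
        = ∑ B : Fin r → {s : Finset α // #s = e}, ∑ a : {s : Finset α // #s = e},
            x ^ #(({u | ∀ i, u ∈ (B i).1} : Finset α) ∩ a.1) := by
      rw [← (Fin.consEquiv fun _ => {s : Finset α // #s = e}).sum_comp,
        Fintype.sum_prod_type_right]
      refine Fintype.sum_congr _ _ fun B => Fintype.sum_congr _ _ fun a => ?_
      congr 2
      ext u
      simp [Fin.forall_fin_succ, and_comm]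
    have hinner (T : Finset α) : ∑ a : {s : Finset α // #s = e}, x ^ #(T ∩ a.1) ≤ C * y ^ #T := by
      have h := sum_pow_card_inter_powersetCard_le (subset_univ T)
        (by rwa [card_univ] : e ≤ #(univ : Finset α)) hx0 hx1
      rwa [sum_subtype _ fun _ => mem_powersetCard_univ, card_univ,
        ← Fintype.card_finset_len] at h
    calc ∑ A : Fin (r + 1) → {s : Finset α // #s = e}, x ^ #{u | ∀ i, u ∈ (A i).1}
        ≤ ∑ B : Fin r → {s : Finset α // #s = e}, C * y ^ #{u | ∀ i, u ∈ (B i).1} :=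
          by rw [hsplit]; exact sum_le_sum fun B _ => hinner _
      _ = C * ∑ B : Fin r → {s : Finset α // #s = e}, y ^ #{u | ∀ i, u ∈ (B i).1} :=
          (mul_sum _ _ _).symm
      _ ≤ C * (C ^ r * (1 - (1 - y) * p ^ r) ^ Fintype.card α) :=
          mul_le_mul_of_nonneg_left (ih (by nlinarith) (by nlinarith)) (Nat.cast_nonneg _)
      _ = C ^ (r + 1) * (1 - (1 - x) * p ^ (r + 1)) ^ Fintype.card α := by ring

end

theorem stmt_15_general (d t r n : ℕ) (hd : 1 ≤ d) (ht : 1 ≤ t)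
    (hn : n = d * t) :
    ((Finset.univ.filter
        (fun A : Fin r → {s : Finset (Fin n) // s.card = d} =>
          ∀ u : Fin n, ∃ i : Fin r, u ∉ (A i).1)).card : ℝ)
      / ((Fintype.card {s : Finset (Fin n) // s.card = d} : ℝ)) ^ r
    ≤ (1 - 1 / (t : ℝ) ^ r) ^ n := by
  have hdn : d ≤ n := hn ▸ Nat.le_mul_of_pos_right d ht
  have hp : (d / Fintype.card (Fin n) : ℝ) = 1 / t := by
    rw [Fintype.card_fin, hn, Nat.cast_mul, div_mul_cancel_left₀ (Nat.cast_ne_zero.2 (by omega)),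
      one_div]
  have hC : (0 : ℝ) < Fintype.card {s : Finset (Fin n) // s.card = d} := by
    rw [Fintype.card_finset_len, Fintype.card_fin]
    exact_mod_cast Nat.choose_pos hdn
  have hempty (A : Fin r → {s : Finset (Fin n) // s.card = d}) :
      (∀ u : Fin n, ∃ i : Fin r, u ∉ (A i).1) ↔ ({u | ∀ i, u ∈ (A i).1} : Finset (Fin n)) = ∅ := by
    simp [filter_eq_empty_iff]
  have hbound := sum_pow_card_common_le (α := Fin n) (e := d) (by rwa [Fintype.card_fin]) r le_rfl
    zero_le_one
  rw [hp, one_div_pow, sub_zero, one_mul, Fintype.card_fin] at hbound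
  rw [div_le_iff₀' (pow_pos hC r), filter_congr fun A _ => hempty A,
    card_filter_eq_empty_eq_sum_zero_pow]
  exact hbound

/-- empty intersection of independent uniform `d`-subsets.
Let `n = d·t` and let `A_1,…,A_r` be independent uniformly random `d`-element
subsets of an `n`-element set. Then
`P(A_1 ∩ ⋯ ∩ A_r = ∅) ≤ (1 − 1/t^r)^n`. The probability is expressed by
counting: the number of `r`-tuples of `d`-subsets with empty intersection,
divided by the total number `(#{d-subsets})^r` of `r`-tuples. -/
theorem stmt_15 (d t r n : ℕ) (hd : 1 ≤ d) (ht : 1 ≤ t) (hr : 1 ≤ r)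
    (hn : n = d * t) :
    ((Finset.univ.filter
        (fun A : Fin r → {s : Finset (Fin n) // s.card = d} =>
          ∀ u : Fin n, ∃ i : Fin r, u ∉ (A i).1)).card : ℝ)
      / ((Fintype.card {s : Finset (Fin n) // s.card = d} : ℝ)) ^ r
    ≤ (1 - 1 / (t : ℝ) ^ r) ^ n :=
  stmt_15_general d t r n hd ht hn
end
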